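/- arXiv:2505.11400 — 7 statements merged into one kernel-verified Lean document; each statement's English description precedes it below -/
import Mathlib

section
/- Let H be a k-graph and let S ⊆ V(H) satisfy |S| ≤ k-1 and deg(S) ≥ 1. Then deg(S) ≥ C(δ⁺(H), k-|S|), the binomial coefficient 'δ⁺(H) choose k-|S|'. -/
open Finset

/-- The degree of a vertex set `S` in the `k`-graph with edge set `E`:
the number of edges containing `S`. -/
def degH {V : Type*} [DecidableEq V] (E : Finset (Finset V)) (S : Finset V) : ℕ :=
  (E.filter (fun e => S ⊆ e)).card

/-- The minimum positive codegree `δ⁺`: the minimum of `deg(S)` over all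
`(k-1)`-element vertex sets `S` with `deg(S) ≥ 1`. -/
noncomputable def posCodeg {V : Type*} [DecidableEq V] (k : ℕ) (E : Finset (Finset V)) : ℕ :=
  sInf {d : ℕ | ∃ S : Finset V, S.card = k - 1 ∧ 1 ≤ degH E S ∧ degH E S = d}

/-!
Passing to the link of `S` (the edges through `S`, with `S` removed) turns the statement into:
a nonempty `(m+1)`-uniform family in which every `m`-set of positive degree has degree at least
`D` has at least `C(D, m+1)` edges. This goes by induction on `m`. Every vertex `v` of the family
has positive degree, and the link of `{v}` again satisfies the hypothesis with `m - 1`, so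
`deg {v} ≥ C(D, m)`. An `m`-subset of an edge has at least `D` further neighbours, so at least
`D + m` vertices are covered. Double counting vertex–edge incidences gives
`(m+1) |E| ≥ (D + m) C(D, m) ≥ (m+1) C(D, m+1)`.
-/

section Link

variable {V : Type*} [DecidableEq V] {E : Finset (Finset V)} {S f g : Finset V}

def link (E : Finset (Finset V)) (S : Finset V) : Finset (Finset V) :=
  {e ∈ E | S ⊆ e}.image (· \ S)

def PosDegreeAtLeast (E : Finset (Finset V)) (j D : ℕ) : Prop :=
  ∀ g : Finset V, #g = j → 0 < degH E g → D ≤ degH E g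

lemma exists_mem_superset_of_degH_pos (h : 0 < degH E g) : ∃ e ∈ E, g ⊆ e := by
  obtain ⟨e, he⟩ := card_pos.1 h
  exact ⟨e, (mem_filter.1 he).1, (mem_filter.1 he).2⟩

lemma degH_singleton (v : V) : degH E {v} = #{e ∈ E | v ∈ e} := by
  simp only [degH, singleton_subset_iff]

lemma card_link : #(link E S) = degH E S :=
  card_image_of_injOn <| (superset_injOn_sdiff S).mono fun _ he => (mem_filter.1 he).2

lemma link_nonempty (h : 0 < degH E S) : (link E S).Nonempty := by
  rwa [← card_pos, card_link]

lemma card_of_mem_link {k : ℕ} (hE : ∀ e ∈ E, #e = k) (hf : f ∈ link E S) : #f = k - #S := by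
  obtain ⟨e, he, rfl⟩ := mem_image.1 hf
  rw [card_sdiff_of_subset (mem_filter.1 he).2, hE e (mem_filter.1 he).1]

lemma disjoint_of_mem_link (hf : f ∈ link E S) : Disjoint f S := by
  obtain ⟨e, -, rfl⟩ := mem_image.1 hf
  exact sdiff_disjoint

lemma degH_link (h : Disjoint g S) : degH (link E S) g = degH E (S ∪ g) := by
  unfold degH link
  rw [filter_image, card_image_of_injOn, filter_filter]
  · congr 1
    refine filter_congr fun e _ => ?_
    rw [subset_sdiff, union_subset_iff]
    tauto
  · exact (superset_injOn_sdiff S).mono fun _ he => (mem_filter.1 (mem_filter.1 he).1).2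

lemma PosDegreeAtLeast.link {j D : ℕ} (hD : PosDegreeAtLeast E (j + #S) D) :
    PosDegreeAtLeast (link E S) j D := by
  intro g hg hpos
  obtain ⟨f, hf, hgf⟩ := exists_mem_superset_of_degH_pos hpos
  have hdisj : Disjoint g S := disjoint_of_subset_left hgf (disjoint_of_mem_link hf)
  rw [degH_link hdisj] at hpos ⊢
  exact hD _ (by rw [card_union_of_disjoint hdisj.symm, hg, add_comm]) hpos

end Link

lemma posDegreeAtLeast_posCodeg {V : Type*} [DecidableEq V] (k : ℕ) (E : Finset (Finset V)) :
    PosDegreeAtLeast E (k - 1) (posCodeg k E) :=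
  fun g hg hpos => Nat.sInf_le ⟨g, hg, hpos, rfl⟩

section Counting

variable {V : Type*} [DecidableEq V] {E : Finset (Finset V)} {D m : ℕ}

lemma add_le_card_sup_of_posDegreeAtLeast (hE : ∀ e ∈ E, #e = m + 1)
    (hD : PosDegreeAtLeast E m D) {e : Finset V} (he : e ∈ E) : D + m ≤ #(E.sup id) := by
  obtain ⟨g, hge, hg⟩ := exists_subset_card_eq (s := e) (n := m) (by rw [hE e he]; omega)
  have hgP : g ⊆ E.sup id := hge.trans (le_sup (f := id) he)
  have hlink : link E g ⊆ (E.sup id \ g).powersetCard 1 := by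
    intro f hf
    obtain ⟨e', he', rfl⟩ := mem_image.1 hf
    refine mem_powersetCard.2 ⟨sdiff_subset_sdiff (le_sup (f := id) (mem_filter.1 he').1) le_rfl, ?_⟩
    rw [card_of_mem_link hE hf, hg, add_tsub_cancel_left]
  have hdeg : D ≤ #(E.sup id \ g) :=
    calc D ≤ degH E g := hD g hg (card_pos.2 ⟨e, mem_filter.2 ⟨he, hge⟩⟩)
      _ = #(link E g) := card_link.symm
      _ ≤ #((E.sup id \ g).powersetCard 1) := card_le_card hlink
      _ = #(E.sup id \ g) := by rw [card_powersetCard, Nat.choose_one_right]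
  rw [card_sdiff_of_subset hgP, hg] at hdeg
  have := card_le_card hgP
  omega

theorem choose_le_card_of_posDegreeAtLeast (hE : ∀ e ∈ E, #e = m + 1)
    (hD : PosDegreeAtLeast E m D) (hne : E.Nonempty) : D.choose (m + 1) ≤ #E := by
  induction m generalizing E with
  | zero =>
    have hdeg : degH E ∅ = #E := by simp [degH]
    simpa [hdeg] using hD ∅ card_empty (hdeg ▸ hne.card_pos)
  | succ m ih =>
    set P := E.sup id
    have hvertex : ∀ v ∈ P, D.choose (m + 1) ≤ #{e ∈ E | v ∈ e} := by
      intro v hv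
      obtain ⟨e, he, hve⟩ := mem_sup.1 hv
      have hDv : PosDegreeAtLeast E (m + #{v}) D := by rwa [card_singleton]
      rw [← degH_singleton, ← card_link]
      refine ih (fun f hf => ?_) hDv.link (link_nonempty ?_)
      · rw [card_of_mem_link hE hf, card_singleton, add_tsub_cancel_right]
      · exact card_pos.2 ⟨e, mem_filter.2 ⟨he, singleton_subset_iff.2 hve⟩⟩
    have hincidences : #P • D.choose (m + 1) ≤ #E • (m + 2) :=
      card_nsmul_le_card_nsmul (· ∈ ·) hvertex fun e he =>
        (card_le_card fun _ hv => (mem_filter.1 hv).2).trans (hE e he).le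
    obtain ⟨e, he⟩ := hne
    have hP : D + (m + 1) ≤ #P := add_le_card_sup_of_posDegreeAtLeast hE hD he
    refine Nat.le_of_mul_le_mul_right ?_ (Nat.succ_pos (m + 1))
    calc D.choose (m + 2) * (m + 2) = D.choose (m + 1) * (D - (m + 1)) :=
          Nat.choose_succ_right_eq D (m + 1)
      _ ≤ #P * D.choose (m + 1) := by rw [mul_comm]; gcongr; omega
      _ ≤ #E * (m + 2) := by simpa only [smul_eq_mul] using hincidences

end Counting

theorem statement3_general {V : Type*} [DecidableEq V] (k : ℕ)
    (E : Finset (Finset V)) (hE : ∀ e ∈ E, e.card = k)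
    (S : Finset V) (hSdeg : 1 ≤ degH E S) :
    Nat.choose (posCodeg k E) (k - S.card) ≤ degH E S := by
  cases h : k - S.card with
  | zero => simpa using hSdeg
  | succ m =>
    have hk : k - 1 = m + #S := by omega
    rw [← card_link]
    refine choose_le_card_of_posDegreeAtLeast (fun f hf => ?_) ?_ (link_nonempty hSdeg)
    · rw [card_of_mem_link hE hf, h]
    · exact PosDegreeAtLeast.link (hk ▸ posDegreeAtLeast_posCodeg k E)

/-- Proposition 1.3(c): if `|S| ≤ k-1` and `deg(S) ≥ 1`, then
`deg(S) ≥ C(δ⁺(H), k - |S|)`. -/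
theorem statement3 {V : Type*} [Fintype V] [DecidableEq V] (k : ℕ)
    (E : Finset (Finset V)) (hE : ∀ e ∈ E, e.card = k)
    (S : Finset V) (hScard : S.card ≤ k - 1) (hSdeg : 1 ≤ degH E S) :
    Nat.choose (posCodeg k E) (k - S.card) ≤ degH E S :=
  statement3_general k E hE S hSdeg
end

section
/- Let k ≥ 3 and 1 ≤ ℓ ≤ k-1 be integers and let C be a k-uniform ℓ-cycle or a k-uniform ℓ-path on n vertices. Then there exists a partition 𝒫 of V(C) into sets each of size ⌊k/(k-ℓ)⌋(k-ℓ), together with possibly one set of smaller size, such that for each S ∈ 𝒫 there is an edge e of C with S ⊆ e. -/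
open Finset

/-- The edge set of the `k`-uniform `ℓ`-path whose vertex order is given by `vs`:
the `i`-th edge consists of the `k` consecutive vertices starting at position `i(k-ℓ)`. -/
def pathEdges {V : Type*} [DecidableEq V] (k ℓ : ℕ) (vs : List V) : Finset (Finset V) :=
  (Finset.range ((vs.length - ℓ) / (k - ℓ))).image
    (fun i => ((vs.drop (i * (k - ℓ))).take k).toFinset)

/-- `E` is (the edge set of) a `k`-uniform `ℓ`-path with vertex order `vs`. -/
def IsLPath {V : Type*} [DecidableEq V] (k ℓ : ℕ) (E : Finset (Finset V)) (vs : List V) :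
    Prop :=
  vs.Nodup ∧ (∃ m, 1 ≤ m ∧ vs.length = m * (k - ℓ) + ℓ) ∧ E = pathEdges k ℓ vs

/-- The edge set of the `k`-uniform `ℓ`-cycle whose cyclic vertex order is given by `vs`. -/
def cycleEdges {V : Type*} [DecidableEq V] (k ℓ : ℕ) (vs : List V) : Finset (Finset V) :=
  (Finset.range (vs.length / (k - ℓ))).image
    (fun i => (((vs ++ vs).drop (i * (k - ℓ))).take k).toFinset)

/-- `E` is (the edge set of) a `k`-uniform `ℓ`-cycle with cyclic vertex order `vs`. -/
def IsLCycle {V : Type*} [DecidableEq V] (k ℓ : ℕ) (E : Finset (Finset V)) (vs : List V) :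
    Prop :=
  vs.Nodup ∧ k ≤ vs.length ∧ (k - ℓ) ∣ vs.length ∧ E = cycleEdges k ℓ vs

/-!
Cut the vertex order into consecutive blocks of `b = ⌊k/(k-ℓ)⌋(k-ℓ)` vertices; only the last
block can be shorter. Edges start at every multiple of `k - ℓ` and `b` is such a multiple with
`b ≤ k`, so each block starts where an edge starts and fits into it. In a path, a block starting
after the first vertex of the last edge lies in that last edge, which ends at the last vertex.
-/

namespace List

variable {α : Type*}

theorem mem_take_drop_iff {l : List α} {s n : ℕ} {x : α} :
    x ∈ (l.drop s).take n ↔ ∃ i, ∃ h : i < l.length, s ≤ i ∧ i < s + n ∧ l[i] = x := by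
  rw [mem_iff_getElem]
  constructor
  · rintro ⟨i, hi, rfl⟩
    simp only [length_take, length_drop, lt_min_iff] at hi
    exact ⟨s + i, by omega, by omega, by omega, by rw [getElem_take, getElem_drop]⟩
  · rintro ⟨i, hi, hsi, hin, rfl⟩
    refine ⟨i - s, by simp only [length_take, length_drop]; omega, ?_⟩
    rw [getElem_take, getElem_drop]
    congr 1
    omega

theorem take_drop_subset_take_drop {l : List α} {s n s' n' : ℕ} (hs : s ≤ s')
    (hn : s' + n' ≤ s + n ∨ l.length ≤ s + n) : (l.drop s').take n' ⊆ (l.drop s).take n := by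
  intro x hx
  obtain ⟨i, hi, hs'i, hin', rfl⟩ := mem_take_drop_iff.1 hx
  exact mem_take_drop_iff.2 ⟨i, hi, by omega, by omega, rfl⟩

theorem take_drop_subset_take_drop_append (l l' : List α) (s n : ℕ) :
    (l.drop s).take n ⊆ ((l ++ l').drop s).take n := by
  intro x hx
  obtain ⟨i, hi, hsi, hin, rfl⟩ := mem_take_drop_iff.1 hx
  exact mem_take_drop_iff.2
    ⟨i, by rw [length_append]; omega, hsi, hin, getElem_append_left hi⟩

theorem Nodup.disjoint_take_drop_mul {l : List α} (hl : l.Nodup) {b j j' : ℕ} (hj : j ≠ j') :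
    Disjoint ((l.drop (j * b)).take b) ((l.drop (j' * b)).take b) := by
  rw [disjoint_left]
  intro x hx hx'
  obtain ⟨i, hi, hji, hij, rfl⟩ := mem_take_drop_iff.1 hx
  obtain ⟨i', hi', hj'i', hi'j', hii'⟩ := mem_take_drop_iff.1 hx'
  obtain rfl : i' = i := (hl.getElem_inj_iff).1 hii'
  exact hj <| (Nat.div_eq_of_lt_le hji (by rw [Nat.succ_mul]; omega)).symm.trans
    (Nat.div_eq_of_lt_le hj'i' (by rw [Nat.succ_mul]; omega))

variable [DecidableEq α]

def blockFinsets (l : List α) (b : ℕ) : Finset (Finset α) :=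
  ((Finset.range l.length).filter (· * b < l.length)).image
    fun j => ((l.drop (j * b)).take b).toFinset

variable {l : List α} {b : ℕ}

theorem mem_blockFinsets (hb : 0 < b) {S : Finset α} :
    S ∈ l.blockFinsets b ↔ ∃ j, j * b < l.length ∧ ((l.drop (j * b)).take b).toFinset = S := by
  simp only [blockFinsets, Finset.mem_image, Finset.mem_filter, Finset.mem_range]
  constructor
  · rintro ⟨j, ⟨-, hj⟩, rfl⟩
    exact ⟨j, hj, rfl⟩
  · rintro ⟨j, hj, rfl⟩
    exact ⟨j, ⟨lt_of_le_of_lt (Nat.le_mul_of_pos_right j hb) hj, hj⟩, rfl⟩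

theorem blockFinsets_pairwiseDisjoint (hl : l.Nodup) :
    ∀ S ∈ l.blockFinsets b, ∀ T ∈ l.blockFinsets b, S ≠ T → _root_.Disjoint S T := by
  simp only [blockFinsets, Finset.mem_image]
  rintro _ ⟨j, -, rfl⟩ _ ⟨j', -, rfl⟩ hne
  rw [disjoint_toFinset_iff_disjoint]
  exact hl.disjoint_take_drop_mul fun h => hne (by rw [h])

theorem biUnion_blockFinsets (hb : 0 < b) : (l.blockFinsets b).biUnion id = l.toFinset := by
  ext x
  simp only [Finset.mem_biUnion, id_eq, mem_blockFinsets hb]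
  constructor
  · rintro ⟨_, ⟨j, -, rfl⟩, hx⟩
    exact mem_toFinset.2 (((take_sublist _ _).trans (drop_sublist _ _)).subset (mem_toFinset.1 hx))
  · intro hx
    obtain ⟨i, hi, rfl⟩ := mem_iff_getElem.1 (mem_toFinset.1 hx)
    have hdiv : i / b * b ≤ i := Nat.div_mul_le_self i b
    have hmod : i < i / b * b + b := by
      have := Nat.lt_div_mul_add (a := i) hb
      omega
    exact ⟨_, ⟨i / b, by omega, rfl⟩,
      mem_toFinset.2 (mem_take_drop_iff.2 ⟨i, hi, hdiv, hmod, rfl⟩)⟩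

theorem card_le_of_mem_blockFinsets {S : Finset α} (hS : S ∈ l.blockFinsets b) : S.card ≤ b := by
  simp only [blockFinsets, Finset.mem_image] at hS
  obtain ⟨j, -, rfl⟩ := hS
  exact (toFinset_card_le _).trans (length_take_le _ _)

theorem card_filter_card_lt_blockFinsets_le_one (hl : l.Nodup) (hb : 0 < b) :
    ((l.blockFinsets b).filter (·.card < b)).card ≤ 1 := by
  rw [Finset.card_le_one]
  -- a short block `j` satisfies `j * b < length ≤ j * b + b`, so `j = (length - 1) / b`
  have hshort : ∀ S ∈ (l.blockFinsets b).filter (·.card < b), ∃ j,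
      j = (l.length - 1) / b ∧ ((l.drop (j * b)).take b).toFinset = S := by
    intro S hS
    obtain ⟨hS, hcard⟩ := Finset.mem_filter.1 hS
    obtain ⟨j, hj, rfl⟩ := (mem_blockFinsets hb).1 hS
    rw [toFinset_card_of_nodup (((take_sublist _ _).trans (drop_sublist _ _)).nodup hl),
      length_take, length_drop] at hcard
    exact ⟨j, (Nat.div_eq_of_lt_le (by omega) (by rw [Nat.succ_mul]; omega)).symm, rfl⟩
  intro S hS T hT
  obtain ⟨j, rfl, rfl⟩ := hshort S hS
  obtain ⟨j', rfl, rfl⟩ := hshort T hT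
  rfl

end List

section

variable {V : Type*} [DecidableEq V] {k ℓ : ℕ} {E : Finset (Finset V)} {vs : List V}

theorem IsLPath.exists_edge_superset_take_drop (hC : IsLPath k ℓ E vs) (hℓk : ℓ < k) {s n : ℕ}
    (hs : k - ℓ ∣ s) (hn : n ≤ k) : ∃ e ∈ E, ((vs.drop s).take n).toFinset ⊆ e := by
  obtain ⟨-, ⟨m, hm, hlen⟩, rfl⟩ := hC
  obtain ⟨c, rfl⟩ := hs
  have hedges : (vs.length - ℓ) / (k - ℓ) = m := by
    rw [hlen, Nat.add_sub_cancel, Nat.mul_div_cancel _ (by omega)]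
  -- the block starting at `(k - ℓ) c` lies in edge `c`, or in the last edge `m - 1` if `c ≥ m`
  have hstart : min c (m - 1) * (k - ℓ) ≤ (k - ℓ) * c := by
    rw [mul_comm]
    exact Nat.mul_le_mul_left _ (min_le_left _ _)
  have hend : (k - ℓ) * c + n ≤ min c (m - 1) * (k - ℓ) + k ∨
      vs.length ≤ min c (m - 1) * (k - ℓ) + k := by
    rcases le_total c (m - 1) with hc | hc
    · rw [min_eq_left hc, mul_comm]
      omega
    · rw [min_eq_right hc, Nat.sub_one_mul, hlen]
      have : k - ℓ ≤ m * (k - ℓ) := Nat.le_mul_of_pos_left _ hm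
      omega
  refine ⟨_, Finset.mem_image_of_mem _ (Finset.mem_range.2 ?_),
    Multiset.toFinset_subset.2 (List.take_drop_subset_take_drop hstart hend)⟩
  omega

theorem IsLCycle.exists_edge_superset_take_drop (hC : IsLCycle k ℓ E vs) {s n : ℕ}
    (hs : k - ℓ ∣ s) (hsl : s < vs.length) (hn : n ≤ k) :
    ∃ e ∈ E, ((vs.drop s).take n).toFinset ⊆ e := by
  obtain ⟨-, -, hdvd, rfl⟩ := hC
  obtain ⟨c, rfl⟩ := hs
  have hwindow : (vs.drop ((k - ℓ) * c)).take n ⊆ ((vs ++ vs).drop (c * (k - ℓ))).take k := by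
    rw [mul_comm c]
    exact List.Subset.trans (List.take_drop_subset_take_drop le_rfl (Or.inl (by omega)))
      (List.take_drop_subset_take_drop_append vs vs _ k)
  have hc : c < vs.length / (k - ℓ) := (Nat.lt_div_iff_mul_lt' hdvd c).2 hsl
  exact ⟨_, Finset.mem_image_of_mem _ (Finset.mem_range.2 hc), Multiset.toFinset_subset.2 hwindow⟩

end

theorem statement5_general {V : Type*} [DecidableEq V] (k ℓ : ℕ) (hℓ1 : 1 ≤ ℓ)
    (hℓ2 : ℓ ≤ k - 1) (E : Finset (Finset V)) (vs : List V)
    (hC : IsLPath k ℓ E vs ∨ IsLCycle k ℓ E vs) :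
    ∃ Part : Finset (Finset V),
      (∀ S ∈ Part, ∀ T ∈ Part, S ≠ T → Disjoint S T) ∧
      Part.biUnion id = vs.toFinset ∧
      (∀ S ∈ Part, S.card ≤ k / (k - ℓ) * (k - ℓ)) ∧
      (Part.filter (fun S => S.card < k / (k - ℓ) * (k - ℓ))).card ≤ 1 ∧
      (∀ S ∈ Part, ∃ e ∈ E, S ⊆ e) := by
  have hℓk : ℓ < k := by omega
  set b := k / (k - ℓ) * (k - ℓ)
  have hb : 0 < b := Nat.mul_pos (Nat.div_pos (Nat.sub_le k ℓ) (by omega)) (by omega)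
  have hbk : b ≤ k := Nat.div_mul_le_self k (k - ℓ)
  have hnd : vs.Nodup := hC.elim (·.1) (·.1)
  refine ⟨vs.blockFinsets b, List.blockFinsets_pairwiseDisjoint hnd, List.biUnion_blockFinsets hb,
    fun S => List.card_le_of_mem_blockFinsets, List.card_filter_card_lt_blockFinsets_le_one hnd hb,
    ?_⟩
  intro S hS
  obtain ⟨j, hj, rfl⟩ := (List.mem_blockFinsets hb).1 hS
  have hdvd : k - ℓ ∣ j * b := (Nat.dvd_mul_left _ _).mul_left j
  rcases hC with hP | hC
  · exact hP.exists_edge_superset_take_drop hℓk hdvd hbk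
  · exact hC.exists_edge_superset_take_drop hdvd hj hbk

/-- Proposition 1.4: the vertex set of a `k`-uniform `ℓ`-path or
`ℓ`-cycle can be partitioned into sets of size `⌊k/(k-ℓ)⌋(k-ℓ)` plus possibly one smaller
set, each contained in an edge. -/
theorem statement5 {V : Type*} [DecidableEq V] (k ℓ : ℕ) (hk : 3 ≤ k) (hℓ1 : 1 ≤ ℓ)
    (hℓ2 : ℓ ≤ k - 1) (E : Finset (Finset V)) (vs : List V)
    (hC : IsLPath k ℓ E vs ∨ IsLCycle k ℓ E vs) :
    ∃ Part : Finset (Finset V),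
      (∀ S ∈ Part, ∀ T ∈ Part, S ≠ T → Disjoint S T) ∧
      Part.biUnion id = vs.toFinset ∧
      (∀ S ∈ Part, S.card ≤ k / (k - ℓ) * (k - ℓ)) ∧
      (Part.filter (fun S => S.card < k / (k - ℓ) * (k - ℓ))).card ≤ 1 ∧
      (∀ S ∈ Part, ∃ e ∈ E, S ⊆ e) :=
  statement5_general k ℓ hℓ1 hℓ2 E vs hC
end

section
/- Let k ≥ 3 and 1 ≤ ℓ ≤ k-1 be integers, set w₁ = k-1 and wᵢ = ⌊k/(k-ℓ)⌋(k-ℓ) - 1 for 2 ≤ i ≤ k. Then for every real number x ≥ 0 there is a k-uniform ℓ-path P together with a partition of V(P) into sets U₁, …, U_k such that every edge of P has precisely one vertex in each Uᵢ and, for each i ∈ [k], wᵢx - k ≤ |Uᵢ| ≤ wᵢx + k. -/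
open Finset

/-!
Lay the path out on the positions `0, …, L - 1`, with `P = ⌊k/(k-ℓ)⌋(k-ℓ)` and `K = k - 1`.
The positions `≡ -1 (mod P)` get colour `0`, and the other positions get the colours `1, …, K`
cyclically, in order. An edge is a window of `k = K + 1` positions starting at a multiple of
`k - ℓ`, which divides `P`; since `k < P + (k - ℓ)`, such a window meets exactly one position of
colour `0` and `K` consecutive others, so it is rainbow. For `L = nP + ℓ` colour `0` has exactly
`n` positions and every other colour about `n(P - 1)/K`; taking `n ≈ Kx` gives the class sizes.
-/

theorem Nat.card_filter_range_count (Q R : ℕ → Prop) [DecidablePred Q] [DecidablePred R]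
    (L : ℕ) :
    #{p ∈ range L | Q p ∧ R (Nat.count Q p)} = #{n ∈ range (Nat.count Q L) | R n} := by
  have hnth : ∀ n < Nat.count Q L, ∀ hf : (Set.ofPred Q).Finite, n < #hf.toFinset :=
    fun n hn hf => hn.trans_le (Nat.count_le_card hf L)
  refine card_nbij' (Nat.count Q) (Nat.nth Q) ?_ ?_ ?_ ?_
  · intro p hp
    simp only [coe_filter, mem_range, Set.mem_ofPred_eq] at hp ⊢
    exact ⟨Nat.count_strict_mono hp.2.1 hp.1, hp.2.2⟩
  · intro n hn
    simp only [coe_filter, mem_range, Set.mem_ofPred_eq] at hn ⊢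
    rw [Nat.count_nth (hnth n hn.1)]
    exact ⟨Nat.nth_lt_of_lt_count hn.1, Nat.nth_mem n (hnth n hn.1), hn.2⟩
  · intro p hp
    simp only [coe_filter, Set.mem_ofPred_eq] at hp
    exact Nat.nth_count hp.2.1
  · intro n hn
    simp only [coe_filter, mem_range, Set.mem_ofPred_eq] at hn
    exact Nat.count_nth (hnth n hn.1)

theorem Nat.count_mod_eq_pred {P : ℕ} (hP : 0 < P) (L : ℕ) :
    Nat.count (· % P = P - 1) L = L / P := by
  have h := Nat.count_modEq_card L hP (P - 1)
  have hlt : ¬ (P - 1) % P < L % P := by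
    rw [Nat.mod_eq_of_lt (by omega)]; have := Nat.mod_lt L hP; omega
  rw [if_neg hlt, add_zero] at h
  rw [← h]
  congr
  ext p
  rw [Nat.ModEq, Nat.mod_eq_of_lt (a := P - 1) (by omega)]

theorem Nat.count_mod_ne_pred {P : ℕ} (hP : 0 < P) (L : ℕ) :
    Nat.count (· % P ≠ P - 1) L = L - L / P := by
  have h := card_filter_add_card_filter_not (s := range L) (fun p => p % P = P - 1)
  rw [card_range, ← Nat.count_eq_card_filter_range, ← Nat.count_eq_card_filter_range,
    Nat.count_mod_eq_pred hP] at h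
  simp only [ne_eq]
  omega

theorem Nat.card_filter_range_mod_eq {K c : ℕ} (hc : c < K) (N : ℕ) :
    #{n ∈ range N | n % K = c} = N / K + if c < N % K then 1 else 0 := by
  rw [← Nat.mod_eq_of_lt hc, ← Nat.count_modEq_card N (by omega) c, Nat.count_eq_card_filter_range]
  rfl

def stripeColour (P K p : ℕ) : ℕ :=
  if p % P = P - 1 then 0 else Nat.count (· % P ≠ P - 1) p % K + 1

section stripeColour

variable {P K : ℕ}

theorem stripeColour_lt (hK : 0 < K) (p : ℕ) : stripeColour P K p < K + 1 := by
  unfold stripeColour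
  split_ifs
  · omega
  · have := Nat.mod_lt (Nat.count (· % P ≠ P - 1) p) hK
    omega

theorem card_filter_stripeColour_zero (hP : 0 < P) (L : ℕ) :
    #{p ∈ range L | stripeColour P K p = 0} = L / P := by
  rw [← Nat.count_mod_eq_pred hP, Nat.count_eq_card_filter_range]
  congr 1
  refine filter_congr fun p _ => ?_
  unfold stripeColour
  split_ifs <;> simp_all

theorem card_filter_stripeColour_succ (hP : 0 < P) (L c : ℕ) :
    #{p ∈ range L | stripeColour P K p = c + 1} = #{n ∈ range (L - L / P) | n % K = c} := by
  rw [← Nat.count_mod_ne_pred hP, ← Nat.card_filter_range_count]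
  congr 1
  refine filter_congr fun p _ => ?_
  unfold stripeColour
  split_ifs <;> simp_all

theorem card_filter_stripeColour_succ_bounds (hP : 0 < P) {c : ℕ} (hc : c < K) (L : ℕ) :
    L - L / P < K * (#{p ∈ range L | stripeColour P K p = c + 1} + 1) ∧
      K * #{p ∈ range L | stripeColour P K p = c + 1} ≤ L - L / P + K := by
  rw [card_filter_stripeColour_succ hP, Nat.card_filter_range_mod_eq hc]
  have h1 := Nat.lt_mul_div_succ (L - L / P) (by omega : 0 < K)
  have h2 := Nat.mul_div_le (L - L / P) K
  split_ifs <;> constructor <;> nlinarith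

theorem stripeColour_injOn_Ico {a : ℕ} (hPK : P ≤ K + 1) (ha : a % P + (K + 1) < 2 * P) :
    Set.InjOn (stripeColour P K) (Ico a (a + (K + 1))) := by
  have hP : 0 < P := by omega
  have ha' := Nat.div_add_mod a P
  have haP := Nat.mod_lt a hP
  -- the window meets at most two consecutive blocks `[bP, bP + P)`
  have hwindow : ∀ p ∈ Ico a (a + (K + 1)),
      (p / P = a / P ∧ p % P = p - P * (a / P) ∧ p < P * (a / P) + P) ∨
      (p / P = a / P + 1 ∧ p % P = p - P * (a / P) - P ∧ P * (a / P) + P ≤ p) := by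
    intro p hp
    rw [mem_Ico] at hp
    have hp' := Nat.div_add_mod p P
    by_cases hz : p < P * (a / P) + P
    · have hdiv : p / P = a / P :=
        Nat.div_eq_of_lt_le (by rw [Nat.mul_comm]; omega) (by rw [Nat.mul_comm]; omega)
      rw [hdiv] at hp' ⊢
      omega
    · have hdiv : p / P = a / P + 1 :=
        Nat.div_eq_of_lt_le (by rw [Nat.mul_comm, Nat.mul_succ]; omega)
          (by rw [Nat.mul_comm, Nat.mul_succ, Nat.mul_succ]; omega)
      rw [hdiv, Nat.mul_succ] at hp'
      omega
  intro p hp p' hp' h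
  have hp1 := hwindow p hp
  have hp1' := hwindow p' hp'
  rw [mem_coe, mem_Ico] at hp hp'
  unfold stripeColour at h
  rw [Nat.count_mod_ne_pred hP, Nat.count_mod_ne_pred hP] at h
  have hbc : a / P ≤ P * (a / P) := Nat.le_mul_of_pos_left _ hP
  generalize P * (a / P) = c at ha' hp1 hp1' hbc
  split_ifs at h
  · omega
  · -- the unmarked positions of the window have ranks `p - p / P` in an interval of length `K`
    have hrank : p - p / P = p' - p' / P :=
      Nat.mod_injOn_Ico (a - a / P) K (by rw [mem_coe, mem_Ico]; omega)
        (by rw [mem_coe, mem_Ico]; omega) (Nat.add_right_cancel h)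
    omega

theorem card_filter_stripeColour_Ico (hK : 0 < K) {a c : ℕ} (hPK : P ≤ K + 1)
    (ha : a % P + (K + 1) < 2 * P) (hc : c < K + 1) :
    #{p ∈ Ico a (a + (K + 1)) | stripeColour P K p = c} = 1 := by
  have hinj := stripeColour_injOn_Ico hPK ha
  have himage : (Ico a (a + (K + 1))).image (stripeColour P K) = range (K + 1) :=
    eq_of_subset_of_card_le
      (fun _ h => by obtain ⟨p, -, rfl⟩ := mem_image.1 h; exact mem_range.2 (stripeColour_lt hK p))
      (by rw [card_image_of_injOn hinj]; simp)
  obtain ⟨p, hp, rfl⟩ := mem_image.1 (himage ▸ mem_range.2 hc)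
  refine card_eq_one.2 ⟨p, ext fun q => ?_⟩
  rw [mem_filter, mem_singleton]
  exact ⟨fun hq => hinj hq.1 hp hq.2, by rintro rfl; exact ⟨hp, rfl⟩⟩

end stripeColour

theorem mem_pathEdges_range {k ℓ L : ℕ} {e : Finset ℕ} (he : e ∈ pathEdges k ℓ (List.range L)) :
    ∃ j, j * (k - ℓ) + k ≤ L ∧ e = Ico (j * (k - ℓ)) (j * (k - ℓ) + k) := by
  simp only [pathEdges, List.length_range, mem_image, mem_range] at he
  obtain ⟨j, hj, rfl⟩ := he
  have hd : 0 < k - ℓ := Nat.pos_of_ne_zero fun h => by simp [h] at hj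
  have hjL : (j + 1) * (k - ℓ) ≤ L - ℓ := (Nat.le_div_iff_mul_le hd).1 hj
  have hjL' : j * (k - ℓ) + k ≤ L := by rw [add_one_mul] at hjL; omega
  refine ⟨j, hjL', ?_⟩
  rw [List.range_eq_range', List.drop_range', List.take_range'_of_length_ge (by omega),
    List.toFinset_range'_1]
  simp

theorem Nat.mod_add_lt_two_mul_of_dvd {a d P k : ℕ} (hP : 0 < P) (hdP : d ∣ P) (hda : d ∣ a)
    (hk : k < P + d) : a % P + k < 2 * P := by
  obtain ⟨s, hs⟩ := (Nat.dvd_mod_iff hdP).2 hda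
  obtain ⟨t, rfl⟩ := hdP
  have hst : s < t := Nat.lt_of_mul_lt_mul_left (hs ▸ Nat.mod_lt a hP)
  have : d * s + d ≤ d * t := by rw [← Nat.mul_succ]; exact Nat.mul_le_mul_left d hst
  omega

theorem card_inter_stripeColour_of_mem_pathEdges {k ℓ L c : ℕ} (hk : 2 ≤ k) (hℓk : ℓ < k)
    (hc : c < k) {e : Finset ℕ} (he : e ∈ pathEdges k ℓ (List.range L)) :
    #(e ∩ {p ∈ range L | stripeColour (k / (k - ℓ) * (k - ℓ)) (k - 1) p = c}) = 1 := by
  obtain ⟨j, hjL, rfl⟩ := mem_pathEdges_range he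
  set d := k - ℓ
  set P := k / d * d
  have hd : 0 < d := by omega
  have hP := Nat.div_add_mod' k d
  have hkd := Nat.mod_lt k hd
  have hwindow : j * d % P + (k - 1 + 1) < 2 * P :=
    Nat.mod_add_lt_two_mul_of_dvd (by omega) (dvd_mul_left _ _) (dvd_mul_left _ j) (by omega)
  have hcard := card_filter_stripeColour_Ico (by omega) (by omega) hwindow (c := c) (by omega)
  rw [Nat.sub_add_cancel (by omega : 1 ≤ k)] at hcard
  rwa [inter_filter, inter_eq_left.2 (fun p hp => mem_range.2 (by rw [mem_Ico] at hp; omega))]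

theorem exists_isLPath_stripe_partition {k ℓ n : ℕ} (hk : 2 ≤ k) (hℓk : ℓ < k) (hn : 1 ≤ n) :
    ∃ (E : Finset (Finset ℕ)) (vs : List ℕ), IsLPath k ℓ E vs ∧
      ∃ U : Fin k → Finset ℕ,
        (∀ i j, i ≠ j → Disjoint (U i) (U j)) ∧
        Finset.univ.biUnion U = vs.toFinset ∧
        (∀ i, ∀ e ∈ E, (e ∩ U i).card = 1) ∧
        (∀ i : Fin k, (i : ℕ) = 0 → #(U i) = n) ∧
        ∀ i : Fin k, (i : ℕ) ≠ 0 →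
          n * (k / (k - ℓ) * (k - ℓ) - 1) + ℓ < (k - 1) * (#(U i) + 1) ∧
          (k - 1) * #(U i) ≤ n * (k / (k - ℓ) * (k - ℓ) - 1) + ℓ + (k - 1) := by
  set P := k / (k - ℓ) * (k - ℓ) with hP
  have hPk := Nat.div_add_mod' k (k - ℓ)
  have hkd := Nat.mod_lt k (by omega : 0 < k - ℓ)
  have hP0 : 0 < P := by omega
  set L := n * P + ℓ with hL
  have hLP : L / P = n := Nat.div_eq_of_lt_le (by omega) (by rw [add_one_mul]; omega)
  have hN : L - L / P = n * (P - 1) + ℓ := by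
    rw [hLP, Nat.mul_sub_one]; have := Nat.le_mul_of_pos_right n hP0; omega
  refine ⟨pathEdges k ℓ (List.range L), List.range L,
    ⟨List.nodup_range, ⟨n * (k / (k - ℓ)), Nat.mul_pos hn (Nat.div_pos (by omega) (by omega)),
      by rw [List.length_range, hL, hP, Nat.mul_assoc]⟩, rfl⟩,
    fun i => {p ∈ range L | stripeColour P (k - 1) p = i}, ?_, ?_,
    fun i e he => card_inter_stripeColour_of_mem_pathEdges hk hℓk i.isLt he, ?_, ?_⟩
  · intro i j hij
    refine disjoint_filter.2 fun p _ hi hj => hij (Fin.ext ?_)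
    rw [← hi, ← hj]
  · ext p
    simp only [mem_biUnion, mem_univ, mem_filter, mem_range, true_and, List.mem_toFinset,
      List.mem_range]
    refine ⟨fun ⟨_, hp, _⟩ => hp, fun hp => ⟨⟨stripeColour P (k - 1) p, ?_⟩, hp, rfl⟩⟩
    have := stripeColour_lt (P := P) (by omega : 0 < k - 1) p
    omega
  · intro i hi
    simp only [hi, card_filter_stripeColour_zero hP0, hLP]
  · intro i hi
    obtain ⟨c, hc⟩ : ∃ c, (i : ℕ) = c + 1 := Nat.exists_eq_succ_of_ne_zero hi
    simp only [hc, ← hN]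
    exact card_filter_stripeColour_succ_bounds hP0 (by omega) L

theorem card_bounds_of_mul_bounds {K p ℓ n u : ℕ} {x : ℝ} (hK : 2 ≤ K) (hp : p ≤ K)
    (hℓ : ℓ ≤ K) (hxn : K * x ≤ n) (hnx : n ≤ K * x + 1) (hlo : n * p + ℓ < K * (u + 1))
    (hhi : K * u ≤ n * p + ℓ + K) :
    (p : ℝ) * x - (K + 1) ≤ u ∧ (u : ℝ) ≤ p * x + (K + 1) := by
  have hK' : (2 : ℝ) ≤ K := by exact_mod_cast hK
  have hp' : (p : ℝ) ≤ K := by exact_mod_cast hp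
  have hℓ' : (ℓ : ℝ) ≤ K := by exact_mod_cast hℓ
  have hlo' : (n : ℝ) * p + ℓ < K * (u + 1) := by exact_mod_cast hlo
  have hhi' : (K : ℝ) * u ≤ n * p + ℓ + K := by exact_mod_cast hhi
  have hnp : (n : ℝ) * p ≤ (K * x + 1) * p := mul_le_mul_of_nonneg_right hnx p.cast_nonneg
  have hxnp : (K : ℝ) * x * p ≤ n * p := mul_le_mul_of_nonneg_right hxn p.cast_nonneg
  have hupper : (K : ℝ) * u ≤ K * (p * x + 3) := by nlinarith
  have hlower : (K : ℝ) * (p * x) < K * (u + 1) := by nlinarith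
  constructor
  · linarith [lt_of_mul_lt_mul_left hlower (by linarith)]
  · linarith [le_of_mul_le_mul_left hupper (by linarith)]

theorem statement8_general (k ℓ : ℕ) (hk : 3 ≤ k) (hℓ2 : ℓ ≤ k - 1)
    (w : Fin k → ℕ)
    (hw : ∀ i : Fin k, w i = if (i : ℕ) = 0 then k - 1 else k / (k - ℓ) * (k - ℓ) - 1)
    (x : ℝ) (hx : 0 ≤ x) :
    ∃ (E : Finset (Finset ℕ)) (vs : List ℕ), IsLPath k ℓ E vs ∧
      ∃ U : Fin k → Finset ℕ,
        (∀ i j, i ≠ j → Disjoint (U i) (U j)) ∧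
        Finset.univ.biUnion U = vs.toFinset ∧
        (∀ i, ∀ e ∈ E, (e ∩ U i).card = 1) ∧
        (∀ i, (w i : ℝ) * x - (k : ℝ) ≤ ((U i).card : ℝ) ∧
          ((U i).card : ℝ) ≤ (w i : ℝ) * x + (k : ℝ)) := by
  have hkx : 0 ≤ ((k - 1 : ℕ) : ℝ) * x := by positivity
  obtain ⟨n, hn, hxn, hnx⟩ : ∃ n : ℕ, 1 ≤ n ∧ ((k - 1 : ℕ) : ℝ) * x ≤ n ∧
      (n : ℝ) ≤ ((k - 1 : ℕ) : ℝ) * x + 1 :=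
    ⟨⌊((k - 1 : ℕ) : ℝ) * x⌋₊ + 1, by omega, by push_cast; exact (Nat.lt_floor_add_one _).le,
      by push_cast; linarith [Nat.floor_le hkx]⟩
  obtain ⟨E, vs, hpath, U, hdisj, hunion, hedge, hzero, hsucc⟩ :=
    exists_isLPath_stripe_partition (k := k) (ℓ := ℓ) (by omega) (by omega) hn
  refine ⟨E, vs, hpath, U, hdisj, hunion, hedge, fun i => ?_⟩
  have hk1 : ((k - 1 : ℕ) : ℝ) + 1 = k := by rw [Nat.cast_sub (by omega)]; ring
  rw [hw i, ← hk1]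
  split_ifs with hi
  · rw [hzero i hi]
    constructor <;> linarith
  · obtain ⟨hlo, hhi⟩ := hsucc i hi
    exact card_bounds_of_mul_bounds (by omega)
      (by have := Nat.div_mul_le_self k (k - ℓ); omega) hℓ2 hxn hnx hlo hhi

/-- consequence of Proposition 1.6: with `w₁ = k-1` and
`wᵢ = ⌊k/(k-ℓ)⌋(k-ℓ) - 1` for `i ≥ 2`, for every real `x ≥ 0` there is a `k`-uniform
`ℓ`-path with vertex classes `U₁, …, U_k` (each edge meeting each class exactly once)
with `|Uᵢ| = wᵢx ± k`. -/
theorem statement8 (k ℓ : ℕ) (hk : 3 ≤ k) (hℓ1 : 1 ≤ ℓ) (hℓ2 : ℓ ≤ k - 1)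
    (w : Fin k → ℕ)
    (hw : ∀ i : Fin k, w i = if (i : ℕ) = 0 then k - 1 else k / (k - ℓ) * (k - ℓ) - 1)
    (x : ℝ) (hx : 0 ≤ x) :
    ∃ (E : Finset (Finset ℕ)) (vs : List ℕ), IsLPath k ℓ E vs ∧
      ∃ U : Fin k → Finset ℕ,
        (∀ i j, i ≠ j → Disjoint (U i) (U j)) ∧
        Finset.univ.biUnion U = vs.toFinset ∧
        (∀ i, ∀ e ∈ E, (e ∩ U i).card = 1) ∧
        (∀ i, (w i : ℝ) * x - (k : ℝ) ≤ ((U i).card : ℝ) ∧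
          ((U i).card : ℝ) ≤ (w i : ℝ) * x + (k : ℝ)) :=
  statement8_general k ℓ hk hℓ2 w hw x hx
end

section
/- Fix integers k ≥ 3 and 1 ≤ ℓ ≤ k-1 and let n be a positive integer divisible by ⌊k/(k-ℓ)⌋(k-ℓ). Let A and B be disjoint sets with |A| = n/(⌊k/(k-ℓ)⌋(k-ℓ)) + 1 and |B| = n - |A|, and let H_ext be the k-graph on vertex set A ∪ B whose edges are all k-element subsets e of A ∪ B with |e ∩ A| ∈ {0,1}. Then (assuming n is sufficiently large in terms of k) H_ext has minimum positive codegree δ⁺(H_ext) = (1 - 1/(⌊k/(k-ℓ)⌋(k-ℓ)))·n - (k-1), has no isolated vertices, and contains no Hamilton ℓ-cycle. -/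
/-!
The edges through a `(k-1)`-set `S` are the sets `insert w S`. If `S` misses `A` every `w ∉ S`
works, and if `S` meets `A` in one vertex exactly the `w ∉ A ∪ S` do; this gives
`δ⁺ = |B| - (k - 2)`.

No Hamilton `ℓ`-cycle exists because `A` is a space barrier: with `d = k - ℓ` and `q = ⌊k/d⌋`,
consecutive edges of the cycle start `d` apart, so each vertex lies in at least `q` of its `n/d`
edges. Each edge meets `A` at most once, so `q|A| ≤ n/d`, contradicting `|A| = n/(qd) + 1`.
-/

open Finset

/-- `E` contains a Hamilton `ℓ`-cycle: there is a cyclic ordering `vs` of all the vertices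
such that every block of `k` consecutive vertices (stepping by `k - ℓ`) is an edge of `E`. -/
def HasHamiltonLCycle {V : Type*} [DecidableEq V] [Fintype V] (k ℓ : ℕ)
    (E : Finset (Finset V)) : Prop :=
  ∃ vs : List V, vs.Nodup ∧ vs.toFinset = Finset.univ ∧ k ≤ vs.length ∧
    (k - ℓ) ∣ vs.length ∧ cycleEdges k ℓ vs ⊆ E

section Codegree

variable {V : Type*} [DecidableEq V]

lemma one_le_degH_iff {E : Finset (Finset V)} {S : Finset V} :
    1 ≤ degH E S ↔ ∃ e ∈ E, S ⊆ e := by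
  simp [degH, Nat.one_le_iff_ne_zero]

lemma degH_eq_card_filter_insert [Fintype V] {E : Finset (Finset V)} {S : Finset V}
    (hE : ∀ e ∈ E, #e = #S + 1) : degH E S = #{w ∈ Sᶜ | insert w S ∈ E} := by
  rw [degH, ← card_image_of_injOn (f := (insert · S))]
  · congr 1
    ext e
    simp only [mem_filter, mem_image, mem_compl]
    constructor
    · rintro ⟨he, hSe⟩
      obtain ⟨w, hw, rfl⟩ := exists_eq_insert_iff.2 ⟨hSe, (hE e he).symm⟩
      exact ⟨w, ⟨hw, he⟩, rfl⟩
    · rintro ⟨w, ⟨-, he⟩, rfl⟩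
      exact ⟨he, subset_insert w S⟩
  · intro w hw _ _ h
    exact (insert_inj (mem_compl.1 (mem_filter.1 hw).1)).1 h

lemma card_insert_inter_of_notMem {A S : Finset V} {w : V} (hw : w ∉ S) :
    #(insert w S ∩ A) = #(S ∩ A) + if w ∈ A then 1 else 0 := by
  by_cases hwA : w ∈ A
  · rw [insert_inter_of_mem hwA, card_insert_of_notMem fun h => hw (mem_inter.1 h).1, if_pos hwA]
  · rw [insert_inter_of_notMem hwA, if_neg hwA, add_zero]

lemma posCodeg_eq_of_attained {k c : ℕ} {E : Finset (Finset V)} (hc : 1 ≤ c)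
    (hattain : ∃ S : Finset V, #S = k - 1 ∧ degH E S = c)
    (hmin : ∀ S : Finset V, #S = k - 1 → 1 ≤ degH E S → c ≤ degH E S) :
    posCodeg k E = c := by
  obtain ⟨S, hS, hSc⟩ := hattain
  have hmem : c ∈ {d : ℕ | ∃ S : Finset V, #S = k - 1 ∧ 1 ≤ degH E S ∧ degH E S = d} :=
    ⟨S, hS, hSc ▸ hc, hSc⟩
  refine le_antisymm (Nat.sInf_le hmem) (le_csInf ⟨c, hmem⟩ ?_)
  rintro _ ⟨T, hT, hT1, rfl⟩
  exact hmin T hT hT1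

end Codegree

lemma card_mul_le_sum_card_inter {ι α : Type*} [DecidableEq α] (I : Finset ι)
    (f : ι → Finset α) (s : Finset α) {q : ℕ} (h : ∀ a ∈ s, q ≤ #{i ∈ I | a ∈ f i}) :
    #s * q ≤ ∑ i ∈ I, #(s ∩ f i) := by
  refine (s.card_nsmul_le_sum _ _ h).trans ?_
  simp_rw [← filter_mem_eq_inter, card_eq_sum_ones, sum_filter]
  exact sum_comm.le

section Extremal

variable {V : Type*} [DecidableEq V] [Fintype V]

def extremalEdges (k : ℕ) (A : Finset V) : Finset (Finset V) :=
  {e ∈ univ.powersetCard k | #(e ∩ A) ≤ 1}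

variable {k : ℕ} {A : Finset V}

lemma mem_extremalEdges {e : Finset V} : e ∈ extremalEdges k A ↔ #e = k ∧ #(e ∩ A) ≤ 1 := by
  simp [extremalEdges]

lemma exists_superset_card_eq_inter_eq (T : Finset V) {r : ℕ} (hT : #T ≤ r)
    (hr : r ≤ #(T ∪ Aᶜ)) : ∃ e, T ⊆ e ∧ #e = r ∧ e ∩ A = T ∩ A := by
  obtain ⟨e, hTe, heT, he⟩ := exists_subsuperset_card_eq subset_union_left hT hr
  refine ⟨e, hTe, he, subset_antisymm (fun x hx => ?_) (inter_subset_inter_right hTe)⟩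
  obtain ⟨hxe, hxA⟩ := mem_inter.1 hx
  rcases mem_union.1 (heT hxe) with hxT | hxAc
  · exact mem_inter.2 ⟨hxT, hxA⟩
  · exact absurd hxA (mem_compl.1 hxAc)

lemma degH_extremalEdges_of_disjoint {S : Finset V} (hS : #S + 1 = k) (h : Disjoint S A) :
    degH (extremalEdges k A) S = #Sᶜ := by
  rw [degH_eq_card_filter_insert fun e he => hS ▸ (mem_extremalEdges.1 he).1]
  refine congrArg card (filter_true_of_mem fun w hw => ?_)
  have hw := mem_compl.1 hw
  rw [mem_extremalEdges, card_insert_of_notMem hw, card_insert_inter_of_notMem hw,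
    disjoint_iff_inter_eq_empty.1 h, card_empty]
  refine ⟨hS, ?_⟩
  split_ifs <;> simp

lemma degH_extremalEdges_of_card_inter_eq_one {S : Finset V} (hS : #S + 1 = k)
    (h : #(S ∩ A) = 1) : degH (extremalEdges k A) S = #(Aᶜ \ S) := by
  rw [degH_eq_card_filter_insert fun e he => hS ▸ (mem_extremalEdges.1 he).1]
  congr 1
  ext w
  simp only [mem_filter, mem_compl, mem_sdiff]
  constructor
  · rintro ⟨hw, he⟩
    rw [mem_extremalEdges, card_insert_inter_of_notMem hw, h] at he
    split_ifs at he with hwA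
    · omega
    · exact ⟨hwA, hw⟩
  · rintro ⟨hwA, hw⟩
    refine ⟨hw, ?_⟩
    rw [mem_extremalEdges, card_insert_of_notMem hw, card_insert_inter_of_notMem hw, h,
      if_neg hwA]
    exact ⟨hS, le_rfl⟩

theorem posCodeg_extremalEdges (hk : 2 ≤ k) (hA : A.Nonempty) (hAc : k - 1 ≤ #Aᶜ) :
    posCodeg k (extremalEdges k A) = #Aᶜ - (k - 2) := by
  have hcard (S : Finset V) (hS : #S + 1 = k) (h : #(S ∩ A) = 1) :
      #(Aᶜ \ S) = #Aᶜ - (k - 2) := by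
    have := card_sdiff_add_card_inter S A
    rw [card_sdiff, ← sdiff_eq_inter_compl]
    omega
  refine posCodeg_eq_of_attained (by omega) ?_ fun S hS hS1 => ?_
  · obtain ⟨a, ha⟩ := hA
    obtain ⟨S, haS, hS, hSA⟩ := exists_superset_card_eq_inter_eq {a} (A := A) (r := k - 1)
      (by simp; omega) ((card_le_card subset_union_right).trans' (by omega))
    have h1 : #(S ∩ A) = 1 := by rw [hSA, singleton_inter_of_mem ha, card_singleton]
    exact ⟨S, hS, (degH_extremalEdges_of_card_inter_eq_one (by omega) h1).trans
      (hcard S (by omega) h1)⟩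
  · obtain ⟨e, he, hSe⟩ := one_le_degH_iff.1 hS1
    have hSA : #(S ∩ A) ≤ 1 :=
      (card_le_card (inter_subset_inter_right hSe)).trans (mem_extremalEdges.1 he).2
    rcases Nat.le_one_iff_eq_zero_or_eq_one.1 hSA with h0 | h1
    · rw [degH_extremalEdges_of_disjoint (by omega)
        (disjoint_iff_inter_eq_empty.2 (card_eq_zero.1 h0)), card_compl S, hS]
      have := card_add_card_compl A
      have := hA.card_pos
      omega
    · rw [degH_extremalEdges_of_card_inter_eq_one (by omega) h1, hcard S (by omega) h1]

lemma one_le_degH_extremalEdges_singleton (hk : 1 ≤ k) (hAc : k ≤ #Aᶜ) (v : V) :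
    1 ≤ degH (extremalEdges k A) {v} := by
  obtain ⟨e, hve, he, heA⟩ := exists_superset_card_eq_inter_eq {v} (A := A) (r := k)
    (by simpa using hk) (hAc.trans (card_le_card subset_union_right))
  refine one_le_degH_iff.2 ⟨e, mem_extremalEdges.2 ⟨he, ?_⟩, hve⟩
  rw [heA]
  exact (card_le_card inter_subset_left).trans (card_singleton v).le

end Extremal

section Cycle

variable {V : Type*} [DecidableEq V]

def cycleBlock (k d : ℕ) (vs : List V) (i : ℕ) : Finset V :=
  (((vs ++ vs).drop (i * d)).take k).toFinset

lemma mem_cycleBlock_of_getElem? {k d i j : ℕ} {vs : List V} {a : V} (hj : j < k)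
    (h : (vs ++ vs)[i * d + j]? = some a) : a ∈ cycleBlock k d vs i := by
  rw [cycleBlock, List.mem_toFinset]
  apply List.mem_of_getElem? (i := j)
  rwa [List.getElem?_take_of_lt hj, List.getElem?_drop]

lemma le_card_filter_mem_cycleBlock {k d q : ℕ} {vs : List V} {a : V} (hd : 0 < d)
    (hdvd : d ∣ vs.length) (hk : k ≤ vs.length) (hqk : q * d ≤ k) (ha : a ∈ vs) :
    q ≤ #{i ∈ range (vs.length / d) | a ∈ cycleBlock k d vs i} := by
  obtain ⟨p, hp, rfl⟩ := List.getElem_of_mem ha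
  set n := vs.length
  set N := n / d
  have hNd : N * d = n := Nat.div_mul_cancel hdvd
  have hpd : p / d * d + p % d = p := Nat.div_add_mod' p d
  have hpN : p / d < N := Nat.div_lt_div_of_lt_of_dvd hdvd hp
  have hqN : q ≤ N := Nat.le_of_mul_le_mul_right (hqk.trans (hk.trans hNd.ge)) hd
  clear_value N
  -- block `start u` begins `u` segments of length `d` before the segment of `vs[p]` (cyclically),
  -- so `vs[p]` sits at offset `p % d + u * d < k` in it
  let start (u : ℕ) : ℕ := if u ≤ p / d then p / d - u else N + p / d - u
  calc q = #(range q) := (card_range q).symm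
    _ ≤ _ := card_le_card_of_injOn start (fun u hu => ?_) (fun u hu v hv h => ?_)
  · have hu : u < q := mem_range.1 hu
    refine mem_filter.2 ⟨mem_range.2 (by simp only [start]; split_ifs <;> omega), ?_⟩
    have hj : p % d + u * d < k := by
      have : (u + 1) * d ≤ q * d := Nat.mul_le_mul_right d hu
      have := Nat.mod_lt p hd
      linarith [add_mul u 1 d]
    refine mem_cycleBlock_of_getElem? hj ?_
    simp only [start]
    split_ifs with huP
    · have : (p / d - u) * d + (p % d + u * d) = p := by
        have := Nat.mul_le_mul_right d huP
        rw [Nat.sub_mul]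
        omega
      rw [this, List.getElem?_append_left hp, List.getElem?_eq_getElem hp]
    · have : (N + p / d - u) * d + (p % d + u * d) = n + p := by
        have := Nat.mul_le_mul_right d (hu.le.trans (hqN.trans (Nat.le_add_right N (p / d))))
        rw [Nat.sub_mul, add_mul]
        omega
      rw [this, List.getElem?_append_right (by omega), Nat.add_sub_cancel_left,
        List.getElem?_eq_getElem hp]
  · have := mem_range.1 hu
    have := mem_range.1 hv
    simp only [start] at h
    generalize p / d = P at h hpN
    split_ifs at h <;> omega

theorem not_hasHamiltonLCycle_of_card_inter_le_one [Fintype V] {k ℓ : ℕ}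
    {E : Finset (Finset V)} {A : Finset V} (hℓ : ℓ < k) (hE : ∀ e ∈ E, #(e ∩ A) ≤ 1)
    (hA : Fintype.card V < k / (k - ℓ) * (k - ℓ) * #A) : ¬ HasHamiltonLCycle k ℓ E := by
  rintro ⟨vs, hnd, huniv, hk, hdvd, hsub⟩
  have hlen : vs.length = Fintype.card V := by
    rw [← List.toFinset_card_of_nodup hnd, huniv, card_univ]
  set d := k - ℓ
  set N := vs.length / d
  have hupper : ∑ i ∈ range N, #(A ∩ cycleBlock k d vs i) ≤ N := calc
    _ ≤ ∑ i ∈ range N, 1 := sum_le_sum fun i hi =>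
        inter_comm A _ ▸ hE _ (hsub (mem_image_of_mem (cycleBlock k d vs) hi))
    _ = N := by simp
  have hlower : #A * (k / d) ≤ ∑ i ∈ range N, #(A ∩ cycleBlock k d vs i) :=
    card_mul_le_sum_card_inter _ _ _ fun a _ => le_card_filter_mem_cycleBlock (by omega) hdvd hk
      (Nat.div_mul_le_self k d) (List.mem_toFinset.1 (huniv ▸ mem_univ a))
  have hNd : d * N = vs.length := Nat.mul_div_cancel' hdvd
  have := Nat.mul_le_mul_left d (hlower.trans hupper)
  rw [hNd, hlen] at this
  linarith [mul_comm (k / d * d) #A, mul_assoc d #A (k / d)]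

end Cycle

/-- Construction 1.7: for sufficiently large `n` divisible by
`⌊k/(k-ℓ)⌋(k-ℓ)`, the `k`-graph on `A ∪ B` (`|A| = n/(⌊k/(k-ℓ)⌋(k-ℓ)) + 1`,
`B` the complement) whose edges are the `k`-sets meeting `A` in at most one vertex
has `δ⁺ = (1 - 1/(⌊k/(k-ℓ)⌋(k-ℓ)))n - (k-1)`, no isolated vertices, and no Hamilton
`ℓ`-cycle. -/
theorem statement9 (k ℓ : ℕ) (hk : 3 ≤ k) (hℓ1 : 1 ≤ ℓ) (hℓ2 : ℓ ≤ k - 1) :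
    ∃ n₀ : ℕ, ∀ n : ℕ, n₀ ≤ n → (k / (k - ℓ) * (k - ℓ)) ∣ n →
      ∀ A : Finset (Fin n), A.card = n / (k / (k - ℓ) * (k - ℓ)) + 1 →
        ∀ E : Finset (Finset (Fin n)),
          E = (Finset.univ.powersetCard k).filter (fun e => (e ∩ A).card ≤ 1) →
          (posCodeg k E : ℝ) = (1 - 1 / ((k / (k - ℓ) * (k - ℓ) : ℕ) : ℝ)) * n - ((k : ℝ) - 1) ∧
          (∀ v : Fin n, 1 ≤ degH E {v}) ∧
          ¬ HasHamiltonLCycle k ℓ E := by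
  refine ⟨2 * k + 4, fun n hn hdvd A hA E hE => ?_⟩
  obtain rfl : E = extremalEdges k A := hE
  have hm : 2 ≤ k / (k - ℓ) * (k - ℓ) := by
    have := Nat.div_add_mod' k (k - ℓ)
    have := Nat.mod_lt k (show 0 < k - ℓ by omega)
    omega
  set m := k / (k - ℓ) * (k - ℓ)
  obtain ⟨t, rfl⟩ := hdvd
  rw [Nat.mul_div_cancel_left t (by omega)] at hA
  have hAc : #Aᶜ = m * t - (t + 1) := by rw [card_compl, Fintype.card_fin, hA]
  have htm : 2 * t ≤ m * t := Nat.mul_le_mul_right t hm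
  refine ⟨?_, one_le_degH_extremalEdges_singleton (by omega) (by omega),
    not_hasHamiltonLCycle_of_card_inter_le_one (by omega) (fun e he => (mem_extremalEdges.1 he).2)
      (by rw [Fintype.card_fin, hA]; change m * t < m * (t + 1); nlinarith)⟩
  rw [posCodeg_extremalEdges (by omega) (card_pos.1 (by omega)) (by omega), hAc,
    Nat.cast_sub (by omega), Nat.cast_sub (by omega), Nat.cast_sub (by omega)]
  have : (m : ℝ) ≠ 0 := by positivity
  push_cast
  field_simp
  ring
end

section
/- Fix an integer k ≥ 2 and a real d ∈ (0,1). Let H be a k-partite k-graph with vertex classes X₁, …, X_k each of size m, with d(X₁, …, X_k) ≥ d. Then H has a subgraph H' (same vertex set, a subset of the edges) with at least one edge and with minimum positive codegree δ⁺(H') > dm/k. -/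
/-!
Every edge meets each class in exactly one vertex, so `|E| ≥ d m^k`, while a `(k-1)`-set of the
shadow `∂E` misses exactly one class and is determined by its vertices in the other classes, so
`|∂E| ≤ k m^(k-1)`. Hence, with `c = dm/k`, the potential `|A| - c |∂A|` is nonnegative at
`A = E`. If some `(k-1)`-set `S` has positive degree at most `c` in `A`, deleting the edges
through `S` removes at most `c` edges and at least one set of the shadow, so the potential stays
nonnegative; the remaining family is nonempty, since otherwise `|A| ≤ c < 2c ≤ c |∂A|`.
Iterating reaches a nonempty subfamily in which every positive codegree exceeds `c`.
-/

open Finset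

/-- `e(V₁,…,V_k)`: the number of edges with exactly one vertex in each part `P i`. -/
def edgeCountT {V : Type*} [DecidableEq V] (k : ℕ) (E : Finset (Finset V))
    (P : Fin k → Finset V) : ℕ :=
  (E.filter (fun e => ∀ i, (e ∩ P i).card = 1)).card

/-- The density `d(V₁,…,V_k) = e(V₁,…,V_k) / ∏ᵢ |Vᵢ|`. -/
noncomputable def densityT {V : Type*} [DecidableEq V] (k : ℕ) (E : Finset (Finset V))
    (P : Fin k → Finset V) : ℝ :=
  (edgeCountT k E P : ℝ) / ∏ i, ((P i).card : ℝ)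

open Function
open scoped FinsetFamily

section Partition

variable {ι V : Type*} [Fintype ι] [DecidableEq V] {X : ι → Finset V}

theorem sum_card_inter_eq_card [Fintype V] (hdisj : Pairwise (Disjoint on X))
    (hcover : univ.biUnion X = univ) (A : Finset V) : ∑ i, (A ∩ X i).card = A.card := by
  rw [← card_biUnion fun i _ j _ hij => (hdisj hij).mono inter_subset_right inter_subset_right,
    ← inter_biUnion, hcover, inter_univ]

theorem card_inter_eq_one_of_card_eq [Fintype V] (hdisj : Pairwise (Disjoint on X))
    (hcover : univ.biUnion X = univ) {e : Finset V} (he : e.card = Fintype.card ι)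
    (hle : ∀ i, (e ∩ X i).card ≤ 1) (i : ι) : (e ∩ X i).card = 1 := by
  have hsum : ∑ i, (e ∩ X i).card = ∑ _i : ι, 1 := by
    simp [sum_card_inter_eq_card hdisj hcover, he]
  exact (sum_eq_sum_iff_of_le fun i _ => hle i).1 hsum i (mem_univ i)

theorem exists_eq_image_of_card_inter_eq_one [Fintype V] (hcover : univ.biUnion X = univ)
    {e : Finset V} (he : ∀ i, (e ∩ X i).card = 1) :
    ∃ x : ι → V, (∀ i, x i ∈ X i) ∧ e = univ.image x := by
  choose x hx using fun i => card_eq_one.1 (he i)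
  have hmem : ∀ i, x i ∈ e ∩ X i := fun i => by simp [hx i]
  refine ⟨x, fun i => (mem_inter.1 (hmem i)).2, ?_⟩
  ext v
  constructor
  · intro hv
    obtain ⟨i, -, hvi⟩ := mem_biUnion.1 (hcover ▸ mem_univ v)
    have hvx : v ∈ e ∩ X i := mem_inter.2 ⟨hv, hvi⟩
    rw [hx i, mem_singleton] at hvx
    exact mem_image.2 ⟨i, mem_univ i, hvx.symm⟩
  · intro hv
    obtain ⟨i, -, rfl⟩ := mem_image.1 hv
    exact (mem_inter.1 (hmem i)).1

theorem erase_image_eq_image_ne [DecidableEq ι] (hdisj : Pairwise (Disjoint on X)) {x : ι → V}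
    (hx : ∀ i, x i ∈ X i) (i : ι) :
    (univ.image x).erase (x i) = univ.image fun j : {j // j ≠ i} => x j := by
  ext v
  simp only [mem_erase, mem_image, mem_univ, true_and, Subtype.exists]
  constructor
  · rintro ⟨hvi, j, rfl⟩
    exact ⟨j, fun hji => hvi (hji ▸ rfl), rfl⟩
  · rintro ⟨j, hji, rfl⟩
    exact ⟨fun h => disjoint_left.1 (hdisj hji) (hx j) (h ▸ hx i), j, rfl⟩

theorem card_shadow_le_of_card_inter_eq_one [DecidableEq ι] [Fintype V]
    (hdisj : Pairwise (Disjoint on X)) (hcover : univ.biUnion X = univ) {m : ℕ}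
    (hX : ∀ i, (X i).card = m) {A : Finset (Finset V)}
    (hA : ∀ e ∈ A, ∀ i, (e ∩ X i).card = 1) :
    (∂ A).card ≤ Fintype.card ι * m ^ (Fintype.card ι - 1) := by
  set T : ι → Finset (Finset V) := fun i =>
    (Fintype.piFinset fun j : {j // j ≠ i} => X j).image fun y => univ.image y
  have hsub : ∂ A ⊆ univ.biUnion T := by
    intro S hS
    obtain ⟨e, he, v, hv, rfl⟩ := mem_shadow_iff.1 hS
    obtain ⟨x, hx, rfl⟩ := exists_eq_image_of_card_inter_eq_one hcover (hA e he)
    obtain ⟨i, -, rfl⟩ := mem_image.1 hv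
    rw [erase_image_eq_image_ne hdisj hx i]
    exact mem_biUnion.2 ⟨i, mem_univ i,
      mem_image.2 ⟨fun j => x j, Fintype.mem_piFinset.2 fun j => hx j, rfl⟩⟩
  have hT : ∀ i, (T i).card ≤ m ^ (Fintype.card ι - 1) := fun i =>
    calc (T i).card ≤ ∏ j : {j // j ≠ i}, (X j).card :=
          card_image_le.trans (Fintype.card_piFinset _).le
      _ = m ^ (Fintype.card ι - 1) := by simp [hX]
  calc (∂ A).card ≤ (univ.biUnion T).card := card_le_card hsub
    _ ≤ ∑ i, (T i).card := card_biUnion_le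
    _ ≤ ∑ _i : ι, m ^ (Fintype.card ι - 1) := sum_le_sum fun i _ => hT i
    _ = Fintype.card ι * m ^ (Fintype.card ι - 1) := by simp

end Partition

section Potential

variable {V : Type*} [DecidableEq V] {k : ℕ} {A : Finset (Finset V)} {S : Finset V}

theorem card_le_card_shadow {e : Finset V} (he : e ∈ A) : e.card ≤ (∂ A).card :=
  calc e.card = (e.image e.erase).card := (card_image_of_injOn e.erase_injOn).symm
    _ ≤ (∂ A).card := card_le_card (image_subset_iff.2 fun _ hv => erase_mem_shadow he hv)

theorem mem_shadow_of_one_le_degH (hA : (A : Set (Finset V)).Sized k) (hk : 1 ≤ k)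
    (hS : S.card = k - 1) (hdeg : 1 ≤ degH A S) : S ∈ ∂ A := by
  obtain ⟨e, he⟩ := card_pos.1 hdeg
  rw [mem_filter] at he
  exact mem_shadow_iff_exists_mem_card_add_one.2 ⟨e, he.1, he.2, by rw [hA he.1, hS]; omega⟩

theorem card_shadow_filter_not_subset_lt (hS : S ∈ ∂ A) :
    (∂ (A.filter fun e => ¬ S ⊆ e)).card < (∂ A).card := by
  refine card_lt_card ⟨shadow_mono (filter_subset _ _), fun h => ?_⟩
  obtain ⟨e, he, hSe⟩ := exists_subset_of_mem_shadow (h hS)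
  exact (mem_filter.1 he).2 hSe

theorem exists_subfamily_forall_lt_degH (hk : 2 ≤ k) {c : ℝ} (hc : 0 < c)
    (hA : (A : Set (Finset V)).Sized k) (hne : A.Nonempty)
    (hpot : c * (∂ A).card ≤ A.card) :
    ∃ B ⊆ A, B.Nonempty ∧
      ∀ S : Finset V, S.card = k - 1 → 1 ≤ degH B S → c < degH B S := by
  induction A using Finset.strongInduction with
  | H A ih =>
  by_cases hgood : ∀ S : Finset V, S.card = k - 1 → 1 ≤ degH A S → c < degH A S
  · exact ⟨A, subset_rfl, hne, hgood⟩
  push Not at hgood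
  obtain ⟨S, hScard, hSpos, hSle⟩ := hgood
  set A' := A.filter fun e => ¬ S ⊆ e
  have hsplit : degH A S + A'.card = A.card := card_filter_add_card_filter_not _
  have hshadow : (∂ A').card + 1 ≤ (∂ A).card :=
    card_shadow_filter_not_subset_lt (mem_shadow_of_one_le_degH hA (by omega) hScard hSpos)
  have hne' : A'.Nonempty := by
    rw [nonempty_iff_ne_empty]
    intro hempty
    obtain ⟨e, he⟩ := hne
    have hcard : A.card = degH A S := by rw [hempty, card_empty] at hsplit; omega
    have htwo : (2 : ℝ) ≤ (∂ A).card := by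
      exact_mod_cast hk.trans ((hA he).symm ▸ card_le_card_shadow he)
    rw [hcard] at hpot
    nlinarith
  have hpot' : c * (∂ A').card ≤ A'.card := by
    have h1 : ((∂ A').card : ℝ) + 1 ≤ (∂ A).card := by exact_mod_cast hshadow
    have h2 : (A'.card : ℝ) = A.card - degH A S := by rw [← hsplit]; push_cast; ring
    nlinarith
  obtain ⟨e, he⟩ := card_pos.1 hSpos
  rw [mem_filter] at he
  obtain ⟨B, hBA', hB⟩ := ih A' (filter_ssubset.2 ⟨e, he.1, not_not.2 he.2⟩)
    (hA.mono (filter_subset _ _)) hne' hpot'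
  exact ⟨B, hBA'.trans (filter_subset _ _), hB⟩

theorem lt_posCodeg {c : ℝ} (hA : (A : Set (Finset V)).Sized k) (hne : A.Nonempty)
    (h : ∀ S : Finset V, S.card = k - 1 → 1 ≤ degH A S → c < degH A S) :
    c < posCodeg k A := by
  obtain ⟨e, he⟩ := hne
  obtain ⟨S, hSe, hS⟩ :=
    exists_subset_card_eq (s := e) (n := k - 1) ((hA he).symm ▸ k.sub_le 1)
  have hdeg : 1 ≤ degH A S := card_pos.2 ⟨e, mem_filter.2 ⟨he, hSe⟩⟩
  obtain ⟨T, hT, hTdeg, hTeq⟩ :=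
    Nat.sInf_mem (s := {d | ∃ S : Finset V, S.card = k - 1 ∧ 1 ≤ degH A S ∧ degH A S = d})
      ⟨_, S, hS, hdeg, rfl⟩
  rw [posCodeg, ← hTeq]
  exact h T hT hTdeg

end Potential

theorem edgeCountT_eq_card {V : Type*} [DecidableEq V] {k : ℕ} {E : Finset (Finset V)}
    {P : Fin k → Finset V} (h : ∀ e ∈ E, ∀ i, (e ∩ P i).card = 1) :
    edgeCountT k E P = E.card := by
  rw [edgeCountT, filter_true_of_mem h]

theorem statement15_general {V : Type*} [DecidableEq V] [Fintype V] (k : ℕ) (hk : 2 ≤ k)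
    (d : ℝ) (hd0 : 0 < d) (m : ℕ)
    (E : Finset (Finset V)) (hE : ∀ e ∈ E, e.card = k)
    (X : Fin k → Finset V)
    (hXdisj : ∀ i j, i ≠ j → Disjoint (X i) (X j))
    (hXcover : Finset.univ.biUnion X = Finset.univ)
    (hXpart : ∀ e ∈ E, ∀ i, (e ∩ X i).card ≤ 1)
    (hXcard : ∀ i, (X i).card = m)
    (hdens : d ≤ densityT k E X) :
    ∃ E' ⊆ E, E'.Nonempty ∧ d * (m : ℝ) / (k : ℝ) < (posCodeg k E' : ℝ) := by
  have hdisj : Pairwise (Disjoint on X) := fun i j hij => hXdisj i j hij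
  have htrans : ∀ e ∈ E, ∀ i, (e ∩ X i).card = 1 := fun e he =>
    card_inter_eq_one_of_card_eq hdisj hXcover (by rw [hE e he, Fintype.card_fin]) (hXpart e he)
  have hdens' : d ≤ E.card / (m : ℝ) ^ k := by
    simpa [densityT, edgeCountT_eq_card htrans, hXcard] using hdens
  have hm : 0 < m := Nat.pos_of_ne_zero fun hm => by
    rw [hm, Nat.cast_zero, zero_pow (by omega), div_zero] at hdens'
    linarith
  have hEcard : d * (m : ℝ) ^ k ≤ E.card := (le_div_iff₀ (by positivity)).1 hdens'
  have hEne : E.Nonempty :=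
    card_pos.1 (by exact_mod_cast (by positivity : 0 < d * (m : ℝ) ^ k).trans_le hEcard)
  have hshadow := card_shadow_le_of_card_inter_eq_one hdisj hXcover hXcard htrans
  rw [Fintype.card_fin] at hshadow
  have hpot : d * m / k * (∂ E).card ≤ E.card := calc
    d * m / k * (∂ E).card ≤ d * m / k * (k * m ^ (k - 1) : ℕ) := by gcongr
    _ = d * m ^ (k - 1 + 1) := by push_cast; field_simp; ring
    _ ≤ E.card := by rwa [Nat.sub_add_cancel (by omega : 1 ≤ k)]
  obtain ⟨B, hBE, hBne, hB⟩ := exists_subfamily_forall_lt_degH hk (by positivity) hE hEne hpot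
  exact ⟨B, hBE, hBne, lt_posCodeg (fun e he => hE e (hBE he)) hBne hB⟩

/-- from the proof of Lemma 3.4: a `k`-partite `k`-graph with classes
of size `m` and density at least `d` has a nonempty subgraph `H'` with
`δ⁺(H') > dm/k`. -/
theorem statement15 {V : Type*} [DecidableEq V] [Fintype V] (k : ℕ) (hk : 2 ≤ k)
    (d : ℝ) (hd0 : 0 < d) (hd1 : d < 1) (m : ℕ)
    (E : Finset (Finset V)) (hE : ∀ e ∈ E, e.card = k)
    (X : Fin k → Finset V)
    (hXdisj : ∀ i j, i ≠ j → Disjoint (X i) (X j))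
    (hXcover : Finset.univ.biUnion X = Finset.univ)
    (hXpart : ∀ e ∈ E, ∀ i, (e ∩ X i).card ≤ 1)
    (hXcard : ∀ i, (X i).card = m)
    (hdens : d ≤ densityT k E X) :
    ∃ E' ⊆ E, E'.Nonempty ∧ d * (m : ℝ) / (k : ℝ) < (posCodeg k E' : ℝ) :=
  statement15_general k hk d hd0 m E hE X hXdisj hXcover hXpart hXcard hdens
end

section
/- Fix integers k ≥ 3 and 1 ≤ ℓ ≤ k-1 and let G be a k-graph on n vertices, where n is divisible by ⌊k/(k-ℓ)⌋(k-ℓ). Set w₁ = k-1 and wᵢ = ⌊k/(k-ℓ)⌋(k-ℓ) - 1 for each 2 ≤ i ≤ k. If δ⁺(G) ≥ (1 - 1/(⌊k/(k-ℓ)⌋(k-ℓ)))·n and G has no isolated vertices, then G admits a perfect (w₁, …, w_k)-weighted fractional matching. -/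
open Finset

open scoped Classical in
/-- The set `E*(G)` of ordered edges of the `k`-graph `E`: ordered `k`-tuples of distinct
vertices whose underlying set is an edge. -/
noncomputable def orderedEdges {V : Type*} [DecidableEq V] [Fintype V] (k : ℕ)
    (E : Finset (Finset V)) : Finset (Fin k → V) :=
  Finset.univ.filter (fun f => Function.Injective f ∧ Finset.univ.image f ∈ E)

/-!
By Farkas' lemma (finitely generated cones are closed by the conic Carathéodory theorem, so the
separation theorem for closed cones applies) a perfect `w`-weighted fractional matching exists
unless some `y : V → ℝ` has `∑ v, y v < 0` although `∑ i, w i * y (e i) ≥ 0` for every ordered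
edge `e`. With `m = ⌊k/(k-ℓ)⌋(k-ℓ)` and the weight `k - 1` on a vertex `v` of an edge `f`,
the latter reads `(k - 1) y v + (m - 1) (y(f) - y v) ≥ 0`. Let `v` minimise `y` with `y v < 0`,
and among the `(k - 1)`-sets through `v` of positive degree let `S` have minimal weight. Every
vertex `x` completing `S` to an edge satisfies `y x ≥ y u` for `u ∈ S \ {v}` (exchange `u` for
`x`), and the constraint on `S ∪ {x}` at `v` then gives `-y v ≤ (m - 1) y x`. At least
`(1 - 1/m) n` vertices complete `S`, and every other vertex has `y ≥ y v`, so `∑ v, y v ≥ 0`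
after all.
-/

section ConicCaratheodory

variable {ι E : Type*} [AddCommGroup E] [Module ℝ E]

lemma PointedCone.mem_hull_image_finset_iff {A : ι → E} {s : Finset ι} {x : E} :
    x ∈ PointedCone.hull ℝ (A '' s) ↔
      ∃ q : ι → ℝ, (∀ i ∈ s, 0 ≤ q i) ∧ ∑ i ∈ s, q i • A i = x := by
  rw [PointedCone.hull, Submodule.mem_span_image_finset_iff_exists_fun']
  constructor
  · rintro ⟨c, rfl⟩
    exact ⟨fun i => c i, fun i _ => (c i).2, by simp⟩
  · rintro ⟨q, hq, rfl⟩
    exact ⟨fun i => Nonneg.toNonneg (q i), sum_congr rfl fun i hi => by simp [hq i hi]⟩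

lemma exists_pos_of_not_linearIndepOn {A : ι → E} {s : Finset ι}
    (h : ¬ LinearIndepOn ℝ A (s : Set ι)) :
    ∃ g : ι → ℝ, ∑ i ∈ s, g i • A i = 0 ∧ ∃ j ∈ s, 0 < g j := by
  simp only [linearIndepOn_iff'', not_forall, exists_prop] at h
  obtain ⟨t, g, hts, hgt, hg, j, hjt, hgj⟩ := h
  have hsum : ∑ i ∈ s, g i • A i = 0 := by
    rw [← hg]
    exact (sum_subset (coe_subset.1 hts) fun i _ hi => by rw [hgt i hi, zero_smul]).symm
  rcases lt_or_gt_of_ne hgj with hneg | hpos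
  · exact ⟨-g, by simp [neg_smul, sum_neg_distrib, hsum], j, coe_subset.1 hts hjt, by simpa⟩
  · exact ⟨g, hsum, j, coe_subset.1 hts hjt, hpos⟩

/-- Moving from `q` along the dependence `g` until a first coefficient vanishes. -/
lemma exists_sum_smul_mem_hull_image_erase [DecidableEq ι] {A : ι → E} {s : Finset ι}
    {q g : ι → ℝ} (hq : ∀ i ∈ s, 0 ≤ q i) (hg : ∑ i ∈ s, g i • A i = 0)
    (hpos : ∃ j ∈ s, 0 < g j) :
    ∃ j ∈ s, ∑ i ∈ s, q i • A i ∈ PointedCone.hull ℝ (A '' ↑(s.erase j)) := by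
  obtain ⟨j, hj, hmin⟩ := exists_min_image (s.filter (0 < g ·)) (fun i => q i / g i)
    (by obtain ⟨j, hj, hgj⟩ := hpos; exact ⟨j, mem_filter.2 ⟨hj, hgj⟩⟩)
  obtain ⟨hjs, hgj⟩ := mem_filter.1 hj
  set τ := q j / g j
  have hτ : 0 ≤ τ := div_nonneg (hq j hjs) hgj.le
  refine ⟨j, hjs, PointedCone.mem_hull_image_finset_iff.2
    ⟨fun i => q i - τ * g i, fun i hi => ?_, ?_⟩⟩
  · have his := mem_of_mem_erase hi
    rcases le_or_gt (g i) 0 with hgi | hgi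
    · nlinarith [hq i his]
    · have := hmin i (mem_filter.2 ⟨his, hgi⟩)
      rw [le_div_iff₀ hgi] at this
      linarith
  · have hj0 : q j - τ * g j = 0 := by simp [τ, div_mul_cancel₀ _ hgj.ne']
    rw [sum_erase _ (by simp [hj0])]
    simp only [sub_smul, sum_sub_distrib, mul_smul, ← smul_sum, hg, smul_zero, sub_zero]

/-- Conic Carathéodory theorem. -/
lemma exists_linearIndepOn_of_mem_hull_image [DecidableEq ι] {A : ι → E} (s : Finset ι) {x : E}
    (hx : x ∈ PointedCone.hull ℝ (A '' s)) :
    ∃ t ⊆ s, LinearIndepOn ℝ A (t : Set ι) ∧ x ∈ PointedCone.hull ℝ (A '' t) := by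
  induction s using Finset.strongInduction generalizing x with
  | H s ih =>
  by_cases hind : LinearIndepOn ℝ A (s : Set ι)
  · exact ⟨s, subset_rfl, hind, hx⟩
  obtain ⟨g, hg, hpos⟩ := exists_pos_of_not_linearIndepOn hind
  obtain ⟨q, hq, rfl⟩ := PointedCone.mem_hull_image_finset_iff.1 hx
  obtain ⟨j, hj, hmem⟩ := exists_sum_smul_mem_hull_image_erase hq hg hpos
  obtain ⟨t, hts, ht, hxt⟩ := ih _ (erase_ssubset hj) hmem
  exact ⟨t, hts.trans (erase_subset _ _), ht, hxt⟩

end ConicCaratheodory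

section Farkas

variable {ι E : Type*} [AddCommGroup E] [Module ℝ E] [TopologicalSpace E] [IsTopologicalAddGroup E]
  [ContinuousSMul ℝ E] [T2Space E]

lemma isClosed_hull_image_of_linearIndepOn {A : ι → E} {t : Finset ι}
    (ht : LinearIndepOn ℝ A (t : Set ι)) :
    IsClosed (PointedCone.hull ℝ (A '' t) : Set E) := by
  set φ := Fintype.linearCombination ℝ (fun i : t => A i)
  have hφ : Topology.IsClosedEmbedding φ :=
    LinearMap.isClosedEmbedding_of_injective
      (LinearMap.ker_eq_bot.2 ht.fintypeLinearCombination_injective)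
  convert hφ.isClosedMap _ (isClosed_Ici (a := (0 : t → ℝ)))
  ext x
  simp only [SetLike.mem_coe, PointedCone.hull, Fintype.mem_span_image_iff_exists_fun,
    Set.mem_image, Set.mem_Ici, φ, Fintype.linearCombination_apply]
  constructor
  · rintro ⟨c, rfl⟩
    exact ⟨fun i => c i, fun i => (c i).2, by simp⟩
  · rintro ⟨c, hc, rfl⟩
    exact ⟨fun i => ⟨c i, hc i⟩, by simp⟩

lemma isClosed_hull_image (A : ι → E) (s : Finset ι) :
    IsClosed (PointedCone.hull ℝ (A '' s) : Set E) := by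
  classical
  set T : Finset (Finset ι) := s.powerset.filter fun t => LinearIndepOn ℝ A (t : Set ι)
  have : (PointedCone.hull ℝ (A '' s) : Set E) =
      ⋃ t ∈ T, (PointedCone.hull ℝ (A '' t) : Set E) := by
    ext x
    simp only [T, SetLike.mem_coe, Set.mem_iUnion, mem_filter, mem_powerset, exists_prop]
    refine ⟨fun hx => ?_, fun ⟨t, ⟨hts, _⟩, hx⟩ => ?_⟩
    · obtain ⟨t, hts, ht, hxt⟩ := exists_linearIndepOn_of_mem_hull_image s hx
      exact ⟨t, ⟨hts, ht⟩, hxt⟩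
    · exact (Submodule.span_mono (Set.image_mono (coe_subset.2 hts)) :
        PointedCone.hull ℝ (A '' t) ≤ PointedCone.hull ℝ (A '' s)) hx
  rw [this]
  exact isClosed_biUnion_finset fun t ht => isClosed_hull_image_of_linearIndepOn (mem_filter.1 ht).2

/-- Farkas' lemma for finitely many generators. -/
lemma mem_hull_image_of_forall_strongDual [LocallyConvexSpace ℝ E] {A : ι → E}
    {s : Finset ι} {b : E} (h : ∀ f : StrongDual ℝ E, (∀ i ∈ s, 0 ≤ f (A i)) → 0 ≤ f b) :
    b ∈ PointedCone.hull ℝ (A '' s) := by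
  by_contra hb
  obtain ⟨f, hf, hfb⟩ := ProperCone.hyperplane_separation_point
    (⟨PointedCone.hull ℝ (A '' s), isClosed_hull_image A s⟩ : ProperCone ℝ E) hb
  exact hfb.not_ge (h f fun i hi => hf _ (Submodule.subset_span ⟨i, hi, rfl⟩))

end Farkas

/-- Farkas' lemma in coordinates. -/
lemma exists_nonneg_sum_mul_eq_of_forall_nonneg {ι V : Type*} [Fintype V]
    (M : ι → V → ℝ) (s : Finset ι) (b : V → ℝ)
    (h : ∀ y : V → ℝ, (∀ i ∈ s, 0 ≤ ∑ v, M i v * y v) → 0 ≤ ∑ v, b v * y v) :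
    ∃ q : ι → ℝ, (∀ i, 0 ≤ q i) ∧ (∀ i ∉ s, q i = 0) ∧ ∀ v, ∑ i ∈ s, q i * M i v = b v := by
  classical
  have hdual (f : StrongDual ℝ (V → ℝ)) (x : V → ℝ) :
      f x = ∑ v, x v * f fun w => if v = w then 1 else 0 := by
    simpa using LinearMap.pi_apply_eq_sum_univ f.toLinearMap x
  obtain ⟨q, hq, hqb⟩ := PointedCone.mem_hull_image_finset_iff.1 <|
    mem_hull_image_of_forall_strongDual (A := M) (s := s) (b := b) fun f hf => by
      rw [hdual f b]
      exact h _ fun i hi => by rw [← hdual f (M i)]; exact hf i hi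
  refine ⟨fun i => if i ∈ s then q i else 0, fun i => ?_, fun i hi => if_neg hi, fun v => ?_⟩
  · by_cases hi : i ∈ s <;> simp [hi, hq]
  · rw [← hqb, Finset.sum_apply]
    exact sum_congr rfl fun i hi => by simp [hi]

section Codegree

variable {V : Type*} [DecidableEq V] {E : Finset (Finset V)} {k : ℕ}

lemma one_le_degH_of_subset {S f : Finset V} (hf : f ∈ E) (hSf : S ⊆ f) : 1 ≤ degH E S :=
  card_pos.2 ⟨f, mem_filter.2 ⟨hf, hSf⟩⟩

lemma posCodeg_le_degH {S : Finset V} (hS : S.card = k - 1) (h : 1 ≤ degH E S) :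
    posCodeg k E ≤ degH E S :=
  Nat.sInf_le ⟨S, hS, h, rfl⟩

variable [Fintype V]

def codegNbhd (E : Finset (Finset V)) (S : Finset V) : Finset V :=
  univ.filter fun x => x ∉ S ∧ insert x S ∈ E

lemma degH_le_card_codegNbhd (hE : ∀ e ∈ E, e.card = k) (hk : 1 ≤ k) {S : Finset V}
    (hS : S.card = k - 1) : degH E S ≤ (codegNbhd E S).card := by
  refine card_le_card_of_surjOn (insert · S) fun f hf => ?_
  obtain ⟨hfE, hSf⟩ := mem_filter.1 hf
  obtain ⟨x, hxS, rfl⟩ := exists_eq_insert_iff.2 ⟨hSf, by rw [hS, hE f hfE]; omega⟩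
  exact ⟨x, mem_filter.2 ⟨mem_univ x, hxS, hfE⟩, rfl⟩

/-- `S` is a set of minimal `y`-weight among the `(k-1)`-sets through `v` of positive degree;
the inequality compares it with `S` with `u` exchanged for `x`. -/
lemma exists_codegree_set_exchange_le (hE : ∀ e ∈ E, e.card = k) (hk : 2 ≤ k) {v : V}
    (hv : 1 ≤ degH E {v}) (y : V → ℝ) :
    ∃ S : Finset V, v ∈ S ∧ S.card = k - 1 ∧ 1 ≤ degH E S ∧
      ∀ u ∈ S.erase v, ∀ x ∈ codegNbhd E S, y u ≤ y x := by
  set C := (univ : Finset (Finset V)).filter fun S => v ∈ S ∧ S.card = k - 1 ∧ 1 ≤ degH E S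
  have hC : C.Nonempty := by
    obtain ⟨f, hf⟩ := card_pos.1 hv
    obtain ⟨hfE, hvf⟩ := mem_filter.1 hf
    rw [singleton_subset_iff] at hvf
    obtain ⟨u, hu⟩ : (f.erase v).Nonempty := by
      rw [← card_pos, card_erase_of_mem hvf, hE f hfE]; omega
    refine ⟨f.erase u, mem_filter.2 ⟨mem_univ _, mem_erase.2 ⟨(ne_of_mem_erase hu).symm, hvf⟩,
      ?_, one_le_degH_of_subset hfE (erase_subset u f)⟩⟩
    rw [card_erase_of_mem (mem_of_mem_erase hu), hE f hfE]
  obtain ⟨S, hSC, hmin⟩ := exists_min_image C (fun S => ∑ u ∈ S, y u) hC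
  obtain ⟨-, hvS, hScard, hSdeg⟩ := mem_filter.1 hSC
  refine ⟨S, hvS, hScard, hSdeg, fun u hu x hx => ?_⟩
  obtain ⟨-, hxS, hxE⟩ := mem_filter.1 hx
  have huS := mem_of_mem_erase hu
  have hx' : x ∉ S.erase u := fun h => hxS (mem_of_mem_erase h)
  have hswap : insert x (S.erase u) ∈ C := by
    refine mem_filter.2 ⟨mem_univ _,
      mem_insert_of_mem (mem_erase.2 ⟨(ne_of_mem_erase hu).symm, hvS⟩), ?_,
      one_le_degH_of_subset hxE (insert_subset_insert x (erase_subset u S))⟩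
    rw [card_insert_of_notMem hx', card_erase_of_mem huS, hScard]
    omega
  have := hmin _ hswap
  rw [sum_insert hx', sum_erase_eq_sub huS] at this
  linarith

lemma neg_le_mul_of_mem_codegNbhd (hk : 2 ≤ k) {m : ℝ} (hm : 1 ≤ m) {y : V → ℝ}
    (hy : ∀ f ∈ E, ∀ v ∈ f, 0 ≤ ((k : ℝ) - 1) * y v + (m - 1) * (∑ u ∈ f, y u - y v))
    {S : Finset V} {v : V} (hvS : v ∈ S) (hS : S.card = k - 1)
    (hexch : ∀ u ∈ S.erase v, ∀ x ∈ codegNbhd E S, y u ≤ y x) {x : V}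
    (hx : x ∈ codegNbhd E S) : -y v ≤ (m - 1) * y x := by
  have hS' : ∑ u ∈ S, y u - y v ≤ ((k : ℝ) - 2) * y x := by
    rw [← sum_erase_eq_sub hvS]
    have := card_nsmul_le_sum (S.erase v) (- y ·) (-y x) fun u hu => neg_le_neg (hexch u hu x hx)
    rw [card_erase_of_mem hvS, hS, nsmul_eq_mul, sum_neg_distrib] at this
    rw [show ((k - 1 - 1 : ℕ) : ℝ) = k - 2 by norm_num [Nat.sub_sub, Nat.cast_sub hk]] at this
    linarith
  obtain ⟨-, hxS, hxE⟩ := mem_filter.1 hx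
  have hedge := hy _ hxE v (mem_insert_of_mem hvS)
  rw [sum_insert hxS] at hedge
  have hk1 : (0 : ℝ) < k - 1 := by
    have : (2 : ℝ) ≤ k := by exact_mod_cast hk
    linarith
  refine le_of_mul_le_mul_left ?_ hk1
  nlinarith [mul_le_mul_of_nonneg_left hS' (sub_nonneg.2 hm)]

/-- The dual bound: every feasible solution of the dual program of perfect
`(k - 1, m - 1, …, m - 1)`-weighted fractional matchings has nonnegative value. -/
theorem sum_nonneg_of_forall_edge (hE : ∀ e ∈ E, e.card = k) (hk : 2 ≤ k) {m : ℝ} (hm : 1 < m)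
    (hdeg : (1 - 1 / m) * Fintype.card V ≤ posCodeg k E) (hiso : ∀ v, 1 ≤ degH E {v})
    (y : V → ℝ)
    (hy : ∀ f ∈ E, ∀ v ∈ f, 0 ≤ ((k : ℝ) - 1) * y v + (m - 1) * (∑ u ∈ f, y u - y v)) :
    0 ≤ ∑ v, y v := by
  rcases isEmpty_or_nonempty V with hV | hV
  · simp
  obtain ⟨v, -, hv⟩ := exists_min_image univ y univ_nonempty
  rcases le_or_gt 0 (y v) with h0 | h0
  · exact sum_nonneg fun u _ => h0.trans (hv u (mem_univ u))
  obtain ⟨S, hvS, hScard, hSdeg, hexch⟩ := exists_codegree_set_exchange_le hE hk (hiso v) y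
  set N := codegNbhd E S
  have hN : (1 - 1 / m) * Fintype.card V ≤ #N := hdeg.trans <| Nat.cast_le.2 <|
    (posCodeg_le_degH hScard hSdeg).trans (degH_le_card_codegNbhd hE (by omega) hScard)
  have hNsum : #N • -y v ≤ ∑ x ∈ N, (m - 1) * y x := card_nsmul_le_sum _ _ _ fun x hx =>
    neg_le_mul_of_mem_codegNbhd hk hm.le hy hvS hScard hexch hx
  have hNcsum : #Nᶜ • y v ≤ ∑ x ∈ Nᶜ, y x := card_nsmul_le_sum _ _ _ fun x _ => hv x (mem_univ x)
  have hcard : (#N : ℝ) + #Nᶜ = Fintype.card V := by exact_mod_cast card_add_card_compl N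
  rw [nsmul_eq_mul, ← mul_sum] at hNsum
  rw [nsmul_eq_mul] at hNcsum
  have hmN : (m - 1) * Fintype.card V ≤ m * #N := by
    have := mul_le_mul_of_nonneg_left hN (by linarith : 0 ≤ m)
    rwa [← mul_assoc, mul_sub, mul_one, mul_one_div_cancel (by linarith)] at this
  rw [← hcard] at hmN
  rw [← sum_add_sum_compl N]
  refine nonneg_of_mul_nonneg_right ?_ (by linarith : 0 < m - 1)
  nlinarith [mul_nonneg (neg_nonneg.2 h0.le) (sub_nonneg.2 hmN),
    mul_le_mul_of_nonneg_left hNcsum (by linarith : 0 ≤ m - 1)]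

end Codegree

section OrderedEdges

variable {V : Type*} [DecidableEq V] {k : ℕ}

lemma sum_mul_apply_of_injective {w : Fin k → ℝ} {a b : ℝ} {i₀ : Fin k} (hw₀ : w i₀ = a)
    (hw : ∀ i ≠ i₀, w i = b) {e : Fin k → V} (he : Function.Injective e) (y : V → ℝ) :
    ∑ i, w i * y (e i) = a * y (e i₀) + b * (∑ u ∈ univ.image e, y u - y (e i₀)) := by
  rw [← add_sum_erase univ _ (mem_univ i₀), hw₀, sum_image fun _ _ _ _ h => he h,
    ← sum_erase_eq_sub (mem_univ i₀), mul_sum]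
  exact congrArg _ (sum_congr rfl fun i hi => by rw [hw i (ne_of_mem_erase hi)])

variable [Fintype V] {E : Finset (Finset V)}

lemma exists_mem_orderedEdges_apply_eq (hE : ∀ e ∈ E, e.card = k) {f : Finset V} (hf : f ∈ E)
    {v : V} (hv : v ∈ f) (i : Fin k) :
    ∃ e ∈ orderedEdges k E, e i = v ∧ univ.image e = f := by
  set σ : Fin k ≃ f := (f.equivFinOfCardEq (hE f hf)).symm
  set τ : Fin k ≃ f := (Equiv.swap i (σ.symm ⟨v, hv⟩)).trans σ
  have himage : univ.image (fun j => (τ j : V)) = f := by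
    ext x
    simp only [mem_image, mem_univ, true_and]
    exact ⟨fun ⟨j, hj⟩ => by rw [← hj]; exact (τ j).2, fun hx => ⟨τ.symm ⟨x, hx⟩, by simp⟩⟩
  refine ⟨fun j => τ j, ?_, by simp [τ], himage⟩
  simp only [orderedEdges, mem_filter, mem_univ, true_and]
  exact ⟨Subtype.val_injective.comp τ.injective, by rw [himage]; exact hf⟩

lemma forall_edge_of_forall_orderedEdges (hE : ∀ e ∈ E, e.card = k) {w : Fin k → ℝ} {a b : ℝ}
    {i₀ : Fin k} (hw₀ : w i₀ = a) (hw : ∀ i ≠ i₀, w i = b) {y : V → ℝ}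
    (hy : ∀ e ∈ orderedEdges k E, 0 ≤ ∑ i, w i * y (e i)) :
    ∀ f ∈ E, ∀ v ∈ f, 0 ≤ a * y v + b * (∑ u ∈ f, y u - y v) := by
  intro f hf v hv
  obtain ⟨e, he, hei, himage⟩ := exists_mem_orderedEdges_apply_eq hE hf hv i₀
  have hinj : Function.Injective e := by
    simp only [orderedEdges, mem_filter] at he
    exact he.2.1
  simpa only [sum_mul_apply_of_injective hw₀ hw hinj, hei, himage] using hy e he

/-- LP duality for perfect `w`-weighted fractional matchings. -/
theorem exists_perfect_fractional_matching_of_dual (w : Fin k → ℝ)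
    (h : ∀ y : V → ℝ, (∀ e ∈ orderedEdges k E, 0 ≤ ∑ i, w i * y (e i)) → 0 ≤ ∑ v, y v) :
    ∃ q : (Fin k → V) → ℝ, (∀ e, 0 ≤ q e) ∧ (∀ e, e ∉ orderedEdges k E → q e = 0) ∧
      ∀ v, ∑ i, ∑ e ∈ (orderedEdges k E).filter (fun e => e i = v), w i * q e = 1 := by
  obtain ⟨q, hq0, hqE, hq⟩ := exists_nonneg_sum_mul_eq_of_forall_nonneg
    (fun (e : Fin k → V) v => ∑ i, if e i = v then w i else 0) (orderedEdges k E) (fun _ => 1)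
    fun y hy => by
      simpa [sum_mul, sum_comm (γ := V)] using h y fun e he => by
        simpa [sum_mul, sum_comm (γ := V)] using hy e he
  refine ⟨q, hq0, hqE, fun v => ?_⟩
  rw [← hq v]
  simp only [sum_filter, mul_sum]
  rw [sum_comm]
  exact sum_congr rfl fun e _ => sum_congr rfl fun i _ => by split_ifs <;> ring

end OrderedEdges

theorem statement16_general (k ℓ n : ℕ) (hk : 3 ≤ k) (hℓ1 : 1 ≤ ℓ) (hℓ2 : ℓ ≤ k - 1)
    (w : Fin k → ℕ)
    (hw : ∀ i : Fin k, w i = if (i : ℕ) = 0 then k - 1 else k / (k - ℓ) * (k - ℓ) - 1)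
    (E : Finset (Finset (Fin n))) (hE : ∀ e ∈ E, e.card = k)
    (hdeg : (1 - 1 / ((k / (k - ℓ) * (k - ℓ) : ℕ) : ℝ)) * n ≤ (posCodeg k E : ℝ))
    (hiso : ∀ v : Fin n, 1 ≤ degH E {v}) :
    ∃ q : (Fin k → Fin n) → ℝ,
      (∀ e, 0 ≤ q e) ∧
      (∀ e, e ∉ orderedEdges k E → q e = 0) ∧
      (∀ v : Fin n,
        ∑ i : Fin k, ∑ e ∈ (orderedEdges k E).filter (fun e => e i = v), (w i : ℝ) * q e
          = 1) := by
  set m := k / (k - ℓ) * (k - ℓ)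
  -- `m = k - k % (k - ℓ) > k - (k - ℓ) = ℓ`
  have hm : 2 ≤ m := by
    have := Nat.div_add_mod' k (k - ℓ)
    have := Nat.mod_lt k (show 0 < k - ℓ by omega)
    omega
  have : NeZero k := ⟨by omega⟩
  have hw₀ : ((w 0 : ℕ) : ℝ) = k - 1 := by simp [hw, Nat.cast_sub (by omega : 1 ≤ k)]
  have hw' : ∀ i ≠ (0 : Fin k), ((w i : ℕ) : ℝ) = m - 1 := fun i hi => by
    simp [hw, Fin.val_ne_zero_iff.2 hi, Nat.cast_sub (by omega : 1 ≤ m), m]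
  refine exists_perfect_fractional_matching_of_dual _ fun y hy => ?_
  refine sum_nonneg_of_forall_edge hE (by omega) (m := m) (by exact_mod_cast hm)
    (by simpa using hdeg) hiso y ?_
  exact forall_edge_of_forall_orderedEdges hE hw₀ hw' hy

/-- Lemma 3.6: with `w₁ = k-1`, `wᵢ = ⌊k/(k-ℓ)⌋(k-ℓ) - 1` for `i ≥ 2`,
if `⌊k/(k-ℓ)⌋(k-ℓ) ∣ n`, `δ⁺(G) ≥ (1 - 1/(⌊k/(k-ℓ)⌋(k-ℓ)))n` and `G` has no isolated
vertices, then `G` admits a perfect `(w₁,…,w_k)`-weighted fractional matching: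
nonnegative weights `q` on the ordered edges such that for every vertex `v`,
`Σᵢ Σ_{e ∈ Eᵢᵛ} wᵢ·q(e) = 1`. -/
theorem statement16 (k ℓ n : ℕ) (hk : 3 ≤ k) (hℓ1 : 1 ≤ ℓ) (hℓ2 : ℓ ≤ k - 1)
    (hdiv : (k / (k - ℓ) * (k - ℓ)) ∣ n)
    (w : Fin k → ℕ)
    (hw : ∀ i : Fin k, w i = if (i : ℕ) = 0 then k - 1 else k / (k - ℓ) * (k - ℓ) - 1)
    (E : Finset (Finset (Fin n))) (hE : ∀ e ∈ E, e.card = k)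
    (hdeg : (1 - 1 / ((k / (k - ℓ) * (k - ℓ) : ℕ) : ℝ)) * n ≤ (posCodeg k E : ℝ))
    (hiso : ∀ v : Fin n, 1 ≤ degH E {v}) :
    ∃ q : (Fin k → Fin n) → ℝ,
      (∀ e, 0 ≤ q e) ∧
      (∀ e, e ∉ orderedEdges k E → q e = 0) ∧
      (∀ v : Fin n,
        ∑ i : Fin k, ∑ e ∈ (orderedEdges k E).filter (fun e => e i = v), (w i : ℝ) * q e
          = 1) :=
  statement16_general k ℓ n hk hℓ1 hℓ2 w hw E hE hdeg hiso
end

section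
/- Fix integers k ≥ 3 and 1 ≤ ℓ ≤ k-1 and a real α > 0, and let G be a k-graph on n vertices, where n is divisible by ⌊k/(k-ℓ)⌋(k-ℓ). Set w₁ = k-1 and wᵢ = ⌊k/(k-ℓ)⌋(k-ℓ) - 1 for each 2 ≤ i ≤ k. If δ⁺(G) ≥ (1 - 1/(⌊k/(k-ℓ)⌋(k-ℓ)))·n + αn and G has no isolated vertices, then G admits a perfect (w₁, …, w_k)-weighted fractional matching q with q(e) ≤ 1/(αn) for every ordered edge e ∈ E*(G). -/
open Finset

/-
By Hahn–Banach separation in `V → ℝ`, weights `0 ≤ q ≤ 1/(αn)` with `∑ₑ q e • χₑ = 1` exist as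
soon as `∑ᵥ y v ≤ (αn)⁻¹ ∑ₑ max ⟪χₑ, y⟫ 0` for every `y : V → ℝ`, where `χₑ` is the weighted
incidence vector of the ordered edge `e`. For the dual inequality write `n = m b` with
`m = ⌊k/(k-ℓ)⌋(k-ℓ)`, let `A` consist of `b + 1` vertices of largest `y`-value and `θ` be the least
value on `A`. Swapping vertices outside `A` one at a time for common neighbours inside `A`, the
codegree bound completes every vertex `v` to `N ≥ αn` edges whose other vertices lie in `A`.
Ordered with `v` first, these edges contribute `N ((k-1) y v + (m-1)(k-1) θ)` for each `v` with
`y v > 0`; and if `θ < 0`, then at least `(m-1) · #{y > 0}` vertices have value at most `θ`, so the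
contributions sum to at least `N (k-1) ∑ᵥ y v`.
-/

lemma two_le_div_mul_self {k d : ℕ} (hd : 0 < d) (hdk : d < k) : 2 ≤ k / d * d := by
  rcases (Nat.one_le_iff_ne_zero.mpr hd.ne').eq_or_lt with rfl | hd2
  · simp only [Nat.div_one, mul_one]; omega
  · exact hd2.trans_le (Nat.le_mul_of_pos_left d (Nat.div_pos hdk.le hd))

lemma sub_le_and_mul_le_sub_sub {n m b δ : ℕ} {α : ℝ} (hα : 0 ≤ α) (hmb : n = m * b)
    (hm : 0 < m) (hδ : δ ≤ n) (h : (1 - 1 / (m : ℝ)) * n + α * n ≤ δ) :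
    n - δ ≤ b ∧ α * n ≤ (b - (n - δ) : ℕ) := by
  have h' : (n : ℝ) - b + α * n ≤ δ := by
    convert h using 2
    rw [hmb, Nat.cast_mul]
    field_simp
  have hnb : n - δ ≤ b := by
    have : ((n - δ : ℕ) : ℝ) ≤ b := by
      rw [Nat.cast_sub hδ]
      nlinarith [mul_nonneg hα (Nat.cast_nonneg n)]
    exact_mod_cast this
  refine ⟨hnb, ?_⟩
  push_cast [hnb, hδ]
  linarith

lemma le_one_div_mul_of_mul_le {s S c l : ℝ} (hl : 0 < l) (hlc : l ≤ c) (hS : 0 ≤ S)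
    (h : c * s ≤ S) : s ≤ 1 / l * S := by
  rcases le_or_gt s 0 with hs | hs
  · exact hs.trans (by positivity)
  rw [div_mul_eq_mul_div, one_mul, le_div_iff₀ hl]
  nlinarith

theorem exists_box_sum_smul_eq {ι V : Type*} [Fintype ι] [Fintype V] (T : Finset ι)
    (χ : ι → V → ℝ) {cap : ℝ} (hcap : 0 ≤ cap) (b : V → ℝ)
    (H : ∀ y : V → ℝ, ∑ v, b v * y v ≤ cap * ∑ e ∈ T, max (∑ v, χ e v * y v) 0) :
    ∃ q : ι → ℝ, (∀ e, 0 ≤ q e) ∧ (∀ e ∉ T, q e = 0) ∧ (∀ e ∈ T, q e ≤ cap) ∧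
      ∑ e ∈ T, q e • χ e = b := by
  classical
  let box : Set (ι → ℝ) := Set.univ.pi fun e => Set.Icc 0 (if e ∈ T then cap else 0)
  let L : (ι → ℝ) →ₗ[ℝ] V → ℝ := ∑ e ∈ T, (LinearMap.proj e).smulRight (χ e)
  have hL : ∀ q, L q = ∑ e ∈ T, q e • χ e := fun q => by simp [L]
  by_cases hb : b ∈ L '' box
  · obtain ⟨q, hq, rfl⟩ := hb
    have hq' (e : ι) : 0 ≤ q e ∧ q e ≤ if e ∈ T then cap else 0 := hq e (Set.mem_univ e)
    refine ⟨q, fun e => (hq' e).1, fun e he => ?_, fun e he => ?_, (hL q).symm⟩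
    · have := hq' e
      simp only [he, if_false] at this
      linarith
    · simpa [he] using (hq' e).2
  -- Otherwise `φ` separates `b` from `L '' box`, and the vertex of the box maximising `φ ∘ L`
  -- contradicts `H` for the vector `y` representing `φ`.
  · exfalso
    have hK : IsCompact (L '' box) :=
      (isCompact_univ_pi fun _ => isCompact_Icc).image L.continuous_of_finiteDimensional
    obtain ⟨φ, u, hφK, hφb⟩ := geometric_hahn_banach_closed_point
      ((convex_pi fun _ _ => convex_Icc _ _).linear_image L) hK.isClosed hb
    set y : V → ℝ := fun v => φ (Pi.single v 1)
    have hφ (x : V → ℝ) : φ x = ∑ v, x v * y v := by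
      conv_lhs => rw [pi_eq_sum_univ' x]
      simp only [map_sum, map_smul, smul_eq_mul, y]
    let q : ι → ℝ := fun e => if e ∈ T ∧ 0 < φ (χ e) then cap else 0
    have hq : q ∈ box := fun e _ => by
      by_cases he : e ∈ T <;> by_cases hχ : 0 < φ (χ e) <;> simp [q, he, hχ, hcap]
    have hφq : φ (L q) = cap * ∑ e ∈ T, max (φ (χ e)) 0 := by
      rw [hL, map_sum, mul_sum]
      refine sum_congr rfl fun e he => ?_
      simp only [map_smul, smul_eq_mul, q]
      by_cases hχ : 0 < φ (χ e)
      · simp [he, hχ, hχ.le]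
      · simp [hχ, not_lt.mp hχ]
    have hHy := H y
    simp only [← hφ] at hHy
    linarith [hφK _ ⟨q, hq, rfl⟩]

section WeightedIncidence

variable {V : Type*} [DecidableEq V] {k : ℕ}

def weightedIncidence (w : Fin k → ℝ) (e : Fin k → V) (v : V) : ℝ :=
  ∑ i, if e i = v then w i else 0

lemma sum_weightedIncidence_mul [Fintype V] (w : Fin k → ℝ) (e : Fin k → V) (y : V → ℝ) :
    ∑ v, weightedIncidence w e v * y v = ∑ i, w i * y (e i) := by
  simp only [weightedIncidence, sum_mul, ite_mul, zero_mul]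
  rw [sum_comm]
  simp

lemma sum_mul_weightedIncidence (w : Fin k → ℝ) (T : Finset (Fin k → V)) (q : (Fin k → V) → ℝ)
    (v : V) : ∑ e ∈ T, q e * weightedIncidence w e v =
      ∑ i, ∑ e ∈ T with e i = v, w i * q e := by
  simp only [weightedIncidence, mul_sum, sum_filter, mul_ite, mul_zero]
  rw [sum_comm]
  exact sum_congr rfl fun i _ => sum_congr rfl fun e _ => by rw [mul_comm]

end WeightedIncidence

section Codegree

variable {V : Type*} [DecidableEq V] {k : ℕ} {E : Finset (Finset V)}

lemma degH_pos_iff {S : Finset V} : 0 < degH E S ↔ ∃ f ∈ E, S ⊆ f := by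
  simp [degH, card_pos, Finset.Nonempty]

variable [Fintype V]

def extensions (E : Finset (Finset V)) (S : Finset V) : Finset V :=
  univ.filter fun u => u ∉ S ∧ insert u S ∈ E

lemma mem_extensions {S : Finset V} {u : V} :
    u ∈ extensions E S ↔ u ∉ S ∧ insert u S ∈ E := by
  simp [extensions]

lemma degH_eq_card_extensions (hE : ∀ e ∈ E, #e = k) {S : Finset V} (hS : #S + 1 = k) :
    degH E S = #(extensions E S) := by
  refine (card_bij (fun u _ => insert u S) (fun u hu => ?_) (fun u hu u' hu' h => ?_)
    (fun e he => ?_)).symm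
  · obtain ⟨-, hu⟩ := mem_extensions.mp hu
    exact mem_filter.mpr ⟨hu, subset_insert u S⟩
  · exact (insert_inj (mem_extensions.mp hu).1).mp h
  · obtain ⟨heE, hSe⟩ := mem_filter.mp he
    obtain ⟨u, hu⟩ : ∃ u, e \ S = {u} := card_eq_one.mp <| by
      rw [card_sdiff_of_subset hSe, hE e heE]; omega
    have hue : u ∈ e \ S := hu ▸ mem_singleton_self u
    have hinsert : insert u S = e := eq_of_subset_of_card_le
      (insert_subset (mem_sdiff.mp hue).1 hSe)
      (by rw [hE e heE, card_insert_of_notMem (mem_sdiff.mp hue).2, hS])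
    exact ⟨u, mem_extensions.mpr ⟨(mem_sdiff.mp hue).2, hinsert ▸ heE⟩, hinsert⟩

lemma posCodeg_le_card_extensions (hE : ∀ e ∈ E, #e = k) {f : Finset V} (hf : f ∈ E) {z : V}
    (hz : z ∈ f) : posCodeg k E ≤ #(extensions E (f.erase z)) := by
  have hcard : #(f.erase z) + 1 = k := by rw [card_erase_add_one hz, hE f hf]
  rw [← degH_eq_card_extensions hE hcard]
  exact Nat.sInf_le ⟨_, by omega, degH_pos_iff.mpr ⟨f, hf, erase_subset z f⟩, rfl⟩

lemma posCodeg_le_card (hE : ∀ e ∈ E, #e = k) {f : Finset V} (hf : f ∈ E) {z : V} (hz : z ∈ f) :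
    posCodeg k E ≤ Fintype.card V :=
  (posCodeg_le_card_extensions hE hf hz).trans (card_le_univ _)

lemma exists_subset_extensions (hE : ∀ e ∈ E, #e = k) {f : Finset V} (hf : f ∈ E) {z : V}
    (hz : z ∈ f) {A : Finset V} {N : ℕ} (hA : Fintype.card V - posCodeg k E + N ≤ #A) :
    ∃ U ⊆ A, #U = N ∧ ∀ u ∈ U, u ∉ f.erase z ∧ insert u (f.erase z) ∈ E := by
  have hext := posCodeg_le_card_extensions hE hf hz
  have hout : #(A \ extensions E (f.erase z)) ≤ Fintype.card V - posCodeg k E :=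
    calc #(A \ extensions E (f.erase z))
        ≤ #(univ \ extensions E (f.erase z)) :=
          card_le_card (sdiff_subset_sdiff (subset_univ A) le_rfl)
      _ = Fintype.card V - #(extensions E (f.erase z)) := by
        rw [card_sdiff_of_subset (subset_univ _), card_univ]
      _ ≤ Fintype.card V - posCodeg k E := Nat.sub_le_sub_left hext _
  obtain ⟨U, hU, hUcard⟩ := exists_subset_card_eq (s := A ∩ extensions E (f.erase z)) (n := N)
    (by have := card_inter_add_card_sdiff A (extensions E (f.erase z)); omega)
  exact ⟨U, hU.trans inter_subset_left, hUcard,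
    fun u hu => mem_extensions.mp (mem_inter.mp (hU hu)).2⟩

lemma exists_mem_erase_subset (hE : ∀ e ∈ E, #e = k) {A : Finset V}
    (hA : Fintype.card V - posCodeg k E < #A) {f : Finset V} (hf : f ∈ E) {v : V} (hv : v ∈ f) :
    ∃ f ∈ E, v ∈ f ∧ f.erase v ⊆ A := by
  -- An edge through `v` with fewest vertices outside `A` has none: one of them could be swapped
  -- for a vertex of `A`.
  obtain ⟨f, hf, hmin⟩ := exists_min_image (E.filter (v ∈ ·)) (fun f => #(f.erase v \ A))
    ⟨f, mem_filter.mpr ⟨hf, hv⟩⟩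
  obtain ⟨hfE, hvf⟩ := mem_filter.mp hf
  refine ⟨f, hfE, hvf, fun z hz => ?_⟩
  by_contra hzA
  obtain ⟨U, hUA, hU, hUext⟩ := exists_subset_extensions hE hfE (mem_of_mem_erase hz) (N := 1) hA
  obtain ⟨u, rfl⟩ := card_eq_one.mp hU
  obtain ⟨-, hinsert⟩ := hUext u (mem_singleton_self u)
  have huA : u ∈ A := hUA (mem_singleton_self u)
  have hvS : v ∈ f.erase z := mem_erase.mpr ⟨fun h => (ne_of_mem_erase hz) h.symm, hvf⟩
  have hlt : (insert u (f.erase z)).erase v \ A ⊂ f.erase v \ A := by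
    rw [ssubset_iff_of_subset]
    · refine ⟨z, mem_sdiff.mpr ⟨hz, hzA⟩, fun h => ?_⟩
      rcases mem_insert.mp (mem_of_mem_erase (mem_sdiff.mp h).1) with rfl | h
      · exact hzA huA
      · exact notMem_erase z f h
    · intro x hx
      simp only [mem_sdiff, mem_erase, mem_insert] at hx ⊢
      rcases hx with ⟨⟨hxv, rfl | ⟨-, hxf⟩⟩, hxA⟩
      · exact absurd huA hxA
      · exact ⟨⟨hxv, hxf⟩, hxA⟩
  exact (card_lt_card hlt).not_ge (hmin _ (mem_filter.mpr ⟨hinsert, mem_insert_of_mem hvS⟩))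

lemma exists_card_eq_edges_erase_subset (hE : ∀ e ∈ E, #e = k) (hk : 2 ≤ k) {A : Finset V}
    {N : ℕ} (hA : Fintype.card V - posCodeg k E + N < #A) {f : Finset V} (hf : f ∈ E) {v : V}
    (hv : v ∈ f) : ∃ F ⊆ E, #F = N ∧ ∀ f ∈ F, v ∈ f ∧ f.erase v ⊆ A := by
  obtain ⟨f, hfE, hvf, hfA⟩ := exists_mem_erase_subset hE (A := A) (by omega) hf hv
  obtain ⟨z, hz⟩ : (f.erase v).Nonempty := by
    rw [← card_pos, card_erase_of_mem hvf, hE f hfE]; omega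
  obtain ⟨U, hUA, hU, hUext⟩ := exists_subset_extensions hE hfE (mem_of_mem_erase hz) hA.le
  refine ⟨U.image (insert · (f.erase z)), ?_, ?_, ?_⟩
  · simpa [image_subset_iff] using fun u hu => (hUext u hu).2
  · rw [card_image_of_injOn fun u hu u' hu' h => (insert_inj (hUext u hu).1).mp h, hU]
  · simp only [mem_image, forall_exists_index, and_imp]
    rintro _ u hu rfl
    refine ⟨mem_insert_of_mem (mem_erase.mpr ⟨fun h => ?_, hvf⟩), fun x hx => ?_⟩
    · exact ne_of_mem_erase hz h.symm
    · obtain ⟨hxv, hx⟩ := mem_erase.mp hx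
      rcases mem_insert.mp hx with rfl | hx
      · exact hUA hu
      · exact hfA (mem_erase.mpr ⟨hxv, mem_of_mem_erase hx⟩)

end Codegree

lemma exists_injective_image_eq_apply_zero {V : Type*} [DecidableEq V] {k : ℕ} [NeZero k]
    {f : Finset V} (hf : #f = k) {v : V} (hv : v ∈ f) :
    ∃ e : Fin k → V, Function.Injective e ∧ univ.image e = f ∧ e 0 = v := by
  let σ : Fin k ≃ f := (f.equivFin.trans (finCongr hf)).symm
  let τ : Fin k ≃ f := σ.trans (Equiv.swap (σ 0) ⟨v, hv⟩)
  refine ⟨fun i => τ i, Subtype.val_injective.comp τ.injective, ?_, by simp [τ]⟩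
  ext u
  simp only [mem_image, mem_univ, true_and]
  exact ⟨by rintro ⟨i, rfl⟩; exact (τ i).2, fun hu => ⟨τ.symm ⟨u, hu⟩, by simp⟩⟩

lemma exists_orderings {V : Type*} [DecidableEq V] {k : ℕ} [NeZero k] {E : Finset (Finset V)}
    (hE : ∀ e ∈ E, #e = k) :
    ∃ ord : V → Finset V → Fin k → V, ∀ v, ∀ f ∈ E, v ∈ f →
      Function.Injective (ord v f) ∧ univ.image (ord v f) = f ∧ ord v f 0 = v := by
  have (v : V) (f : Finset V) : ∃ e : Fin k → V, f ∈ E → v ∈ f →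
      Function.Injective e ∧ univ.image e = f ∧ e 0 = v := by
    by_cases h : f ∈ E ∧ v ∈ f
    · obtain ⟨e, he⟩ := exists_injective_image_eq_apply_zero (hE f h.1) h.2
      exact ⟨e, fun _ _ => he⟩
    · exact ⟨fun _ => v, fun h1 h2 => absurd ⟨h1, h2⟩ h⟩
  choose ord hord using this
  exact ⟨ord, hord⟩

lemma mem_orderedEdges {V : Type*} [DecidableEq V] [Fintype V] {k : ℕ} {E : Finset (Finset V)}
    {e : Fin k → V} : e ∈ orderedEdges k E ↔ Function.Injective e ∧ univ.image e ∈ E := by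
  simp [orderedEdges]

lemma add_mul_le_sum_mul {k : ℕ} [NeZero k] {w x : Fin k → ℝ} {c θ : ℝ} (hc : 0 ≤ c)
    (hw : ∀ i ≠ 0, w i = c) (hx : ∀ i ≠ 0, θ ≤ x i) :
    w 0 * x 0 + c * ((k - 1) * θ) ≤ ∑ i, w i * x i := by
  rw [← add_sum_erase _ _ (mem_univ 0)]
  gcongr
  calc c * ((k - 1) * θ) = ∑ _i ∈ univ.erase (0 : Fin k), c * θ := by
        rw [sum_const, card_erase_of_mem (mem_univ 0), card_univ, Fintype.card_fin, nsmul_eq_mul,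
          Nat.cast_pred (Nat.pos_of_ne_zero (NeZero.ne k))]
        ring
    _ ≤ ∑ i ∈ univ.erase 0, w i * x i := sum_le_sum fun i hi => by
        rw [hw i (ne_of_mem_erase hi)]
        exact mul_le_mul_of_nonneg_left (hx i (ne_of_mem_erase hi)) hc

lemma exists_card_eq_forall_notMem_le {V β : Type*} [Fintype V] [DecidableEq V] [LinearOrder β]
    (y : V → β) {W : ℕ} (hW : W ≤ Fintype.card V) :
    ∃ A : Finset V, #A = W ∧ ∀ u ∉ A, ∀ a ∈ A, y u ≤ y a := by
  induction W with
  | zero => exact ⟨∅, card_empty, by simp⟩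
  | succ W ih =>
    obtain ⟨A, hA, htop⟩ := ih (by omega)
    obtain ⟨x, hx, hmax⟩ := exists_max_image (univ \ A) y <| by
      rw [← card_pos, card_sdiff_of_subset (subset_univ A), card_univ]; omega
    have hxA : x ∉ A := (mem_sdiff.mp hx).2
    refine ⟨insert x A, by rw [card_insert_of_notMem hxA, hA], fun u hu a ha => ?_⟩
    have huA : u ∉ A := fun h => hu (mem_insert_of_mem h)
    rcases mem_insert.mp ha with rfl | ha
    · exact hmax u (mem_sdiff.mpr ⟨mem_univ u, huA⟩)
    · exact htop u huA a ha

lemma sum_le_sum_pos_add_mul {V : Type*} [Fintype V] [DecidableEq V] (y : V → ℝ)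
    {A : Finset V} {a₀ : V} (ha₀ : a₀ ∈ A) (hout : ∀ u ∉ A, y u ≤ y a₀)
    {c : ℝ} (hc : 0 ≤ c) (hcA : c * (#A - 1) + #A ≤ Fintype.card V + 1) :
    ∑ v, y v ≤ ∑ v with 0 < y v, y v + c * #{v | 0 < y v} * y a₀ := by
  rw [← sum_filter_add_sum_filter_not univ (0 < y ·)]
  gcongr
  set P : Finset V := {v | 0 < y v}
  have hnonpos : ∀ v ∈ univ.filter (¬ 0 < y ·), y v ≤ 0 :=
    fun v hv => not_lt.mp (mem_filter.mp hv).2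
  rcases le_or_gt 0 (y a₀) with hθ | hθ
  · exact (sum_nonpos hnonpos).trans (by positivity)
  -- Now `P ⊆ A.erase a₀`, and the `#Aᶜ + 1 ≥ c * #P` vertices of `insert a₀ Aᶜ` have value
  -- at most `y a₀ < 0`.
  set D := insert a₀ (univ \ A)
  have hPA : P ⊆ A.erase a₀ := fun v hv => by
    have hv : 0 < y v := (mem_filter.mp hv).2
    refine mem_erase.mpr ⟨fun h => by subst h; linarith, ?_⟩
    by_contra hvA
    linarith [hout v hvA]
  have hDcard : (#D : ℝ) = Fintype.card V - #A + 1 := by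
    rw [card_insert_of_notMem (by simp [ha₀]), card_sdiff_of_subset (subset_univ A), card_univ,
      Nat.cast_add, Nat.cast_sub (card_le_univ A)]
    simp
  have hD : D ⊆ univ.filter (¬ 0 < y ·) := by
    intro v hv
    refine mem_filter.mpr ⟨mem_univ v, not_lt.mpr ?_⟩
    rcases mem_insert.mp hv with rfl | hv
    · exact hθ.le
    · exact (hout v (mem_sdiff.mp hv).2).trans hθ.le
  have hcP : c * #P ≤ #D := by
    have : (#P : ℝ) + 1 ≤ #A := by
      have := card_le_card hPA
      rw [card_erase_of_mem ha₀] at this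
      have := card_pos.mpr ⟨a₀, ha₀⟩
      exact_mod_cast (by omega : #P + 1 ≤ #A)
    rw [hDcard]
    nlinarith
  calc ∑ v ∈ univ.filter (¬ 0 < y ·), y v
      ≤ ∑ v ∈ D, y v := by
        rw [← sum_sdiff hD]
        have : ∑ v ∈ univ.filter (¬ 0 < y ·) \ D, y v ≤ 0 :=
          sum_nonpos fun v hv => hnonpos v (mem_sdiff.mp hv).1
        linarith
    _ ≤ #D * y a₀ := by
        rw [← nsmul_eq_mul]
        refine sum_le_card_nsmul _ _ _ fun v hv => ?_
        rcases mem_insert.mp hv with rfl | hv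
        · exact le_rfl
        · exact hout v (mem_sdiff.mp hv).2
    _ ≤ c * #P * y a₀ := mul_le_mul_of_nonpos_right hcP hθ.le

section DualBound

variable {V : Type*} [Fintype V] [DecidableEq V] {k : ℕ} {E : Finset (Finset V)}

lemma card_mul_sum_le_sum_orderedEdges (hE : ∀ e ∈ E, #e = k) (hk : 2 ≤ k)
    (hiso : ∀ v, ∃ f ∈ E, v ∈ f) {w : Fin k → ℝ} {a c : ℝ} (hc : 0 ≤ c)
    (hw : ∀ i : Fin k, w i = if (i : ℕ) = 0 then a else c) (y : V → ℝ) {A : Finset V} {θ : ℝ}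
    (hθ : ∀ u ∈ A, θ ≤ y u) {N : ℕ} (hA : Fintype.card V - posCodeg k E + N < #A)
    (P : Finset V) :
    N * ∑ v ∈ P, (a * y v + c * ((k - 1) * θ)) ≤
      ∑ e ∈ orderedEdges k E, max (∑ i, w i * y (e i)) 0 := by
  have : NeZero k := ⟨by omega⟩
  have hw0 : w 0 = a := by simp [hw]
  have hwc (i : Fin k) (hi : i ≠ 0) : w i = c := by simp [hw, Fin.val_ne_zero_iff.mpr hi]
  choose f₀ hf₀E hvf₀ using hiso
  choose F hFE hFcard hF using fun v => exists_card_eq_edges_erase_subset hE hk hA (hf₀E v) (hvf₀ v)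
  obtain ⟨ord, hord⟩ := exists_orderings hE
  have hordF (x : Σ _ : V, Finset V) (hx : x ∈ P.sigma F) :
      Function.Injective (ord x.1 x.2) ∧ univ.image (ord x.1 x.2) = x.2 ∧ ord x.1 x.2 0 = x.1 :=
    have hx := mem_sigma.mp hx
    hord _ _ (hFE _ hx.2) (hF _ _ hx.2).1
  have hinj : Set.InjOn (fun x : Σ _ : V, Finset V => ord x.1 x.2) (P.sigma F) :=
    fun x hx x' hx' h => by
      obtain ⟨-, himg, h0⟩ := hordF x hx
      obtain ⟨-, himg', h0'⟩ := hordF x' hx'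
      have h : ord x.1 x.2 = ord x'.1 x'.2 := h
      exact Sigma.ext (h0.symm.trans (h ▸ h0')) (heq_of_eq (himg.symm.trans (h ▸ himg')))
  calc N * ∑ v ∈ P, (a * y v + c * ((k - 1) * θ))
      = ∑ x ∈ P.sigma F, (w 0 * y x.1 + c * ((k - 1) * θ)) := by
        rw [sum_sigma, mul_sum]
        refine sum_congr rfl fun v _ => ?_
        simp only [sum_const, hFcard, nsmul_eq_mul, hw0]
    _ ≤ ∑ x ∈ P.sigma F, max (∑ i, w i * y (ord x.1 x.2 i)) 0 := sum_le_sum fun x hx => by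
        obtain ⟨hinj, himg, h0⟩ := hordF x hx
        refine le_trans ?_ ((add_mul_le_sum_mul hc hwc fun i hi => hθ _ ?_).trans (le_max_left _ _))
        · rw [h0]
        · refine (hF _ _ (mem_sigma.mp hx).2).2 (mem_erase.mpr ⟨fun h => hi ?_, ?_⟩)
          · exact hinj (h.trans h0.symm)
          · have := mem_image_of_mem (ord x.1 x.2) (mem_univ i)
            rwa [himg] at this
    _ = ∑ e ∈ (P.sigma F).image (fun x => ord x.1 x.2), max (∑ i, w i * y (e i)) 0 :=
        (sum_image (f := fun e => max (∑ i, w i * y (e i)) 0) hinj).symm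
    _ ≤ ∑ e ∈ orderedEdges k E, max (∑ i, w i * y (e i)) 0 := by
        refine sum_le_sum_of_subset_of_nonneg (fun e he => ?_) fun _ _ _ => le_max_right _ _
        obtain ⟨x, hx, rfl⟩ := mem_image.mp he
        obtain ⟨hinj, himg, -⟩ := hordF x hx
        rw [mem_orderedEdges, himg]
        exact ⟨hinj, hFE _ (mem_sigma.mp hx).2⟩

theorem mul_sum_le_sum_orderedEdges (hE : ∀ e ∈ E, #e = k) (hk : 2 ≤ k)
    (hiso : ∀ v, ∃ f ∈ E, v ∈ f) {m b N : ℕ} (hm : 2 ≤ m) (hmb : m * b = Fintype.card V)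
    (hN : Fintype.card V - posCodeg k E + N ≤ b) {w : Fin k → ℝ}
    (hw : ∀ i : Fin k, w i = if (i : ℕ) = 0 then (k - 1 : ℝ) else m - 1) (y : V → ℝ) :
    N * (k - 1) * ∑ v, y v ≤ ∑ e ∈ orderedEdges k E, max (∑ i, w i * y (e i)) 0 := by
  have hmax_nonneg : 0 ≤ ∑ e ∈ orderedEdges k E, max (∑ i, w i * y (e i)) 0 :=
    sum_nonneg fun _ _ => le_max_right _ _
  obtain rfl | hb := Nat.eq_zero_or_pos b
  · obtain rfl : N = 0 := by omega
    simpa using hmax_nonneg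
  obtain ⟨A, hA, htop⟩ := exists_card_eq_forall_notMem_le y (W := b + 1) (by nlinarith)
  obtain ⟨a₀, ha₀, hmin⟩ := exists_min_image A y (card_pos.mp (by omega))
  have hm1 : (0 : ℝ) ≤ m - 1 := by
    have : (2 : ℝ) ≤ m := by exact_mod_cast hm
    linarith
  have hk1 : (0 : ℝ) ≤ k - 1 := by
    have : (2 : ℝ) ≤ k := by exact_mod_cast hk
    linarith
  have hsum := sum_le_sum_pos_add_mul y ha₀ (fun u hu => htop u hu a₀ ha₀) hm1 <| by
    have : (m * b : ℝ) = Fintype.card V := by exact_mod_cast hmb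
    rw [hA]
    push_cast
    linarith
  have hedges := card_mul_sum_le_sum_orderedEdges hE hk hiso hm1 hw y hmin (N := N)
    (by omega) {v | 0 < y v}
  calc N * (k - 1) * ∑ v, y v
      ≤ N * (k - 1) * (∑ v with 0 < y v, y v + (m - 1) * #{v | 0 < y v} * y a₀) :=
        mul_le_mul_of_nonneg_left hsum (by positivity)
    _ = N * ∑ v with 0 < y v, ((k - 1) * y v + (m - 1) * ((k - 1) * y a₀)) := by
        rw [sum_add_distrib, ← mul_sum, sum_const, nsmul_eq_mul]
        ring
    _ ≤ _ := hedges

end DualBound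

/-- Corollary 3.7: with `w₁ = k-1`, `wᵢ = ⌊k/(k-ℓ)⌋(k-ℓ) - 1` for
`i ≥ 2`, if `⌊k/(k-ℓ)⌋(k-ℓ) ∣ n`, `δ⁺(G) ≥ (1 - 1/(⌊k/(k-ℓ)⌋(k-ℓ)))n + αn` and `G` has
no isolated vertices, then `G` admits a perfect `(w₁,…,w_k)`-weighted fractional matching
with all weights at most `1/(αn)`. -/
theorem statement17 (k ℓ n : ℕ) (hk : 3 ≤ k) (hℓ1 : 1 ≤ ℓ) (hℓ2 : ℓ ≤ k - 1)
    (α : ℝ) (hα : 0 < α)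
    (hdiv : (k / (k - ℓ) * (k - ℓ)) ∣ n)
    (w : Fin k → ℕ)
    (hw : ∀ i : Fin k, w i = if (i : ℕ) = 0 then k - 1 else k / (k - ℓ) * (k - ℓ) - 1)
    (E : Finset (Finset (Fin n))) (hE : ∀ e ∈ E, e.card = k)
    (hdeg : (1 - 1 / ((k / (k - ℓ) * (k - ℓ) : ℕ) : ℝ)) * n + α * n ≤ (posCodeg k E : ℝ))
    (hiso : ∀ v : Fin n, 1 ≤ degH E {v}) :
    ∃ q : (Fin k → Fin n) → ℝ,
      (∀ e, 0 ≤ q e) ∧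
      (∀ e, e ∉ orderedEdges k E → q e = 0) ∧
      (∀ e ∈ orderedEdges k E, q e ≤ 1 / (α * n)) ∧
      (∀ v : Fin n,
        ∑ i : Fin k, ∑ e ∈ (orderedEdges k E).filter (fun e => e i = v), (w i : ℝ) * q e
          = 1) := by
  obtain rfl | hn := Nat.eq_zero_or_pos n
  · exact ⟨0, fun _ => le_rfl, fun _ _ => rfl, fun _ _ => by simp, fun v => v.elim0⟩
  set m := k / (k - ℓ) * (k - ℓ)
  obtain ⟨b, hmb⟩ := hdiv
  have hm : 2 ≤ m := two_le_div_mul_self (by omega) (by omega)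
  have hiso' (v : Fin n) : ∃ f ∈ E, v ∈ f := by simpa using degH_pos_iff.mp (hiso v)
  obtain ⟨f₀, hf₀, hv₀⟩ := hiso' ⟨0, hn⟩
  have hδn : posCodeg k E ≤ n := by simpa using posCodeg_le_card hE hf₀ hv₀
  obtain ⟨hnb, hαN⟩ := sub_le_and_mul_le_sub_sub hα.le hmb (by omega) hδn hdeg
  have hk1 : (1 : ℝ) ≤ k - 1 := by
    have : (3 : ℝ) ≤ k := by exact_mod_cast hk
    linarith
  have hw' (i : Fin k) : (w i : ℝ) = if (i : ℕ) = 0 then (k - 1 : ℝ) else m - 1 := by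
    rw [hw i]
    split_ifs <;> push_cast [show 1 ≤ k by omega, show 1 ≤ m by omega] <;> rfl
  obtain ⟨q, hq0, hqT, hqcap, hq⟩ := exists_box_sum_smul_eq (orderedEdges k E)
    (weightedIncidence fun i => (w i : ℝ)) (cap := 1 / (α * n)) (by positivity) 1 fun y => by
      simp only [Pi.one_apply, one_mul, sum_weightedIncidence_mul]
      exact le_one_div_mul_of_mul_le (by positivity)
        (hαN.trans (le_mul_of_one_le_right (Nat.cast_nonneg _) hk1))
        (sum_nonneg fun _ _ => le_max_right _ _)
        (mul_sum_le_sum_orderedEdges hE (by omega) hiso' hm (by rw [Fintype.card_fin, hmb])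
          (by rw [Fintype.card_fin]; omega) hw' y)
  refine ⟨q, hq0, hqT, hqcap, fun v => ?_⟩
  rw [← sum_mul_weightedIncidence]
  simpa using congrFun hq v
end
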